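/- arXiv:1604.04978 — 7 statements merged into one kernel-verified Lean document; each statement's English description precedes it below -/
import Mathlib

section
/- If two disjoint cycles C1 and C2 of a permutation on the vertices of a graph are mutually routable in 2 steps (i.e., all pebbles in C1 ∪ C2 can be routed to their destinations in 2 matching steps using only edges between the vertex sets C1 and C2), then |C1| = |C2|. -/
/-- A single routing step on `G`: an involutive permutation that swaps the pebbles
on the endpoints of each edge of a matching of `G`. -/
def IsMatchingStep {V : Type*} (G : SimpleGraph V) (σ : Equiv.Perm V) : Prop :=
  (∀ v, σ (σ v) = v) ∧ ∀ v, σ v ≠ v → G.Adj v (σ v)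

/-- The permutation `π` (giving the destination of each pebble) can be routed on `G`
in `k` matching steps. -/
def RoutableIn {V : Type*} (G : SimpleGraph V) (π : Equiv.Perm V) (k : ℕ) : Prop :=
  ∃ L : List (Equiv.Perm V), L.length = k ∧ (∀ σ ∈ L, IsMatchingStep G σ) ∧
    L.reverse.prod = π

/-- The routing time `rt(G, π)`: the minimum number of matching steps needed to
route `π` on `G`. -/
noncomputable def routingTime {V : Type*} (G : SimpleGraph V) (π : Equiv.Perm V) : ℕ :=
  sInf {k | RoutableIn G π k}

/-- The routing number `rt(G)`: the maximum of `rt(G, π)` over all permutations `π`. -/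
noncomputable def routingNumber {V : Type*} (G : SimpleGraph V) : ℕ :=
  sSup (Set.range fun π : Equiv.Perm V => routingTime G π)

/-- If two disjoint (nontrivial) cycles of a permutation are mutually routable in
2 matching steps using only edges between the two cycles, then they have the same length. -/
theorem cycles_mutually_routable_in_two_steps_same_length
    {V : Type*} [Fintype V] [DecidableEq V] (G : SimpleGraph V) (π : Equiv.Perm V)
    (C1 C2 : Finset V)
    (h1 : π.IsCycleOn (C1 : Set V)) (h2 : π.IsCycleOn (C2 : Set V))
    (hd : Disjoint C1 C2) (hn1 : 2 ≤ C1.card) (hn2 : 2 ≤ C2.card)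
    (σ1 σ2 : Equiv.Perm V)
    (hm1 : IsMatchingStep G σ1) (hm2 : IsMatchingStep G σ2)
    (hcross1 : ∀ v, σ1 v ≠ v → (v ∈ C1 ∧ σ1 v ∈ C2) ∨ (v ∈ C2 ∧ σ1 v ∈ C1))
    (hcross2 : ∀ v, σ2 v ≠ v → (v ∈ C1 ∧ σ2 v ∈ C2) ∨ (v ∈ C2 ∧ σ2 v ∈ C1))
    (hroute : ∀ v ∈ C1 ∪ C2, σ2 (σ1 v) = π v) :
    C1.card = C2.card := by
  have hnt1 : (C1 : Set V).Nontrivial := by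
    obtain ⟨a, ha, b, hb, hab⟩ := Finset.one_lt_card.1 (by omega : 1 < C1.card)
    exact ⟨a, ha, b, hb, hab⟩
  have hnt2 : (C2 : Set V).Nontrivial := by
    obtain ⟨a, ha, b, hb, hab⟩ := Finset.one_lt_card.1 (by omega : 1 < C2.card)
    exact ⟨a, ha, b, hb, hab⟩
  have key : ∀ v, (v ∈ C1 → σ1 v ∈ C2) ∧ (v ∈ C2 → σ1 v ∈ C1) := by
    intro v
    constructor
    · intro hv
      have hπ : π v ∈ C1 := h1.1.mapsTo hv
      have hπne : π v ≠ v := h1.apply_ne hnt1 hv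
      have hmove : σ1 v ≠ v := by
        intro h
        have hr : σ2 v = π v := by
          have := hroute v (Finset.mem_union_left _ hv); rwa [h] at this
        have h2' : σ2 v ≠ v := by rw [hr]; exact hπne
        rcases hcross2 v h2' with ⟨_, hin⟩ | ⟨hin, _⟩
        · rw [hr] at hin; exact Finset.disjoint_left.1 hd hπ hin
        · exact Finset.disjoint_left.1 hd hv hin
      rcases hcross1 v hmove with ⟨_, hin⟩ | ⟨hin, _⟩
      · exact hin
      · exact absurd hin (Finset.disjoint_left.1 hd hv)
    · intro hv
      have hπ : π v ∈ C2 := h2.1.mapsTo hv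
      have hπne : π v ≠ v := h2.apply_ne hnt2 hv
      have hmove : σ1 v ≠ v := by
        intro h
        have hr : σ2 v = π v := by
          have := hroute v (Finset.mem_union_right _ hv); rwa [h] at this
        have h2' : σ2 v ≠ v := by rw [hr]; exact hπne
        rcases hcross2 v h2' with ⟨hin, _⟩ | ⟨_, hin⟩
        · exact Finset.disjoint_left.1 hd hin hv
        · rw [hr] at hin; exact Finset.disjoint_left.1 hd hin hπ
      rcases hcross1 v hmove with ⟨hin, _⟩ | ⟨_, hin⟩
      · exact absurd hv (Finset.disjoint_left.1 hd hin)
      · exact hin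
  apply le_antisymm
  · exact Finset.card_le_card_of_injOn σ1 (fun v hv => (key v).1 hv)
      fun a _ b _ h => σ1.injective h
  · exact Finset.card_le_card_of_injOn σ1 (fun v hv => (key v).2 hv)
      fun a _ b _ h => σ1.injective h
end

section
/- For a connected graph G and permutation π, rt(G, π) = 2 if and only if the cycle graph G_cycle(π) — whose vertices are the nontrivial cycles of π, with a loop at a cycle that is individually routable in 2 steps and an edge between two cycles that are mutually routable in 2 steps — has a perfect matching (where loops may cover their own vertex). -/
/-- A cycle `c` of a permutation is individually routable in 2 steps on `G`: it can be
routed in 2 matching steps using only edges of the subgraph induced by its support. -/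
def IndivRoutable2 {V : Type*} [Fintype V] [DecidableEq V] (G : SimpleGraph V)
    (c : Equiv.Perm V) : Prop :=
  ∃ σ1 σ2 : Equiv.Perm V, IsMatchingStep G σ1 ∧ IsMatchingStep G σ2 ∧
    (∀ v, σ1 v ≠ v → v ∈ c.support) ∧ (∀ v, σ2 v ≠ v → v ∈ c.support) ∧
    σ2 * σ1 = c

/-- Two cycles `c`, `d` of a permutation are mutually routable in 2 steps on `G`: they
can be routed in 2 matching steps using only edges between their supports. -/
def MutuallyRoutable2 {V : Type*} [Fintype V] [DecidableEq V] (G : SimpleGraph V)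
    (c d : Equiv.Perm V) : Prop :=
  ∃ σ1 σ2 : Equiv.Perm V, IsMatchingStep G σ1 ∧ IsMatchingStep G σ2 ∧
    (∀ v, σ1 v ≠ v → (v ∈ c.support ∧ σ1 v ∈ d.support) ∨ (v ∈ d.support ∧ σ1 v ∈ c.support)) ∧
    (∀ v, σ2 v ≠ v → (v ∈ c.support ∧ σ2 v ∈ d.support) ∨ (v ∈ d.support ∧ σ2 v ∈ c.support)) ∧
    σ2 * σ1 = c * d
open Equiv Equiv.Perm Function

namespace RoutingAux

variable {V : Type*} [Fintype V] [DecidableEq V]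

set_option linter.unusedSectionVars false

/-- Restrict an involution to an invariant finset. -/
noncomputable def restrictPerm (σ : Equiv.Perm V) (S : Finset V) (hinv : ∀ v, σ (σ v) = v)
    (hS : ∀ v ∈ S, σ v ∈ S) : Equiv.Perm V :=
  Function.Involutive.toPerm (fun v => if v ∈ S then σ v else v) (by
    intro v
    by_cases h : v ∈ S
    · simp only [h, if_true, hS v h, hinv]
    · simp [h])

lemma restrictPerm_apply (σ : Equiv.Perm V) (S : Finset V) (hinv : ∀ v, σ (σ v) = v)
    (hS : ∀ v ∈ S, σ v ∈ S) (v : V) :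
    restrictPerm σ S hinv hS v = if v ∈ S then σ v else v := rfl

lemma restrictPerm_step (G : SimpleGraph V) (σ : Equiv.Perm V) (S : Finset V)
    (hinv : ∀ v, σ (σ v) = v) (hS : ∀ v ∈ S, σ v ∈ S) (hstep : IsMatchingStep G σ) :
    IsMatchingStep G (restrictPerm σ S hinv hS) := by
  constructor
  · intro v
    rw [restrictPerm_apply, restrictPerm_apply]
    by_cases h : v ∈ S
    · simp only [h, if_true, hS v h, hinv]
    · simp [h]
  · intro v hv
    rw [restrictPerm_apply] at hv ⊢
    by_cases h : v ∈ S
    · rw [if_pos h]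
      rw [if_pos h] at hv
      exact hstep.2 v hv
    · exact absurd (if_neg h) hv

lemma forward_dir (G : SimpleGraph V) (π σ1 σ2 : Equiv.Perm V)
    (h1 : IsMatchingStep G σ1) (h2 : IsMatchingStep G σ2) (hprod : σ2 * σ1 = π) :
    ∃ f : Equiv.Perm V → Equiv.Perm V,
      ∀ c ∈ π.cycleFactorsFinset, f c ∈ π.cycleFactorsFinset ∧ f (f c) = c ∧
        (f c = c → IndivRoutable2 G c) ∧ (f c ≠ c → MutuallyRoutable2 G c (f c)) := by
  classical
  have hsq1 : σ1 * σ1 = 1 := Equiv.ext fun v => h1.1 v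
  have hsq2 : σ2 * σ2 = 1 := Equiv.ext fun v => h2.1 v
  have hinv1 : σ1⁻¹ = σ1 := inv_eq_of_mul_eq_one_left hsq1
  have hinv2 : σ2⁻¹ = σ2 := inv_eq_of_mul_eq_one_left hsq2
  have cancel1 : ∀ x : Equiv.Perm V, σ1 * (σ1 * x) = x := fun x => by
    rw [← mul_assoc, hsq1, one_mul]
  have cancel1' : ∀ x : Equiv.Perm V, x * σ1 * σ1 = x := fun x => by
    rw [mul_assoc, hsq1, mul_one]
  have hσ2eq : ∀ v, σ2 v = π (σ1 v) := by
    intro v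
    have h : σ2 = π * σ1 := by rw [← hprod, mul_assoc, hsq1, mul_one]
    rw [h]; rfl
  have hkey : ∀ v, π (σ1 v) = σ1 (π⁻¹ v) := by
    intro v
    have h : π⁻¹ = σ1 * σ2 := by rw [← hprod, mul_inv_rev, hinv1, hinv2]
    rw [h]
    simp only [Equiv.Perm.mul_apply]
    rw [← hprod]
    simp only [Equiv.Perm.mul_apply, h1.1]
  set f : Equiv.Perm V → Equiv.Perm V := fun c => σ1 * c⁻¹ * σ1 with hf
  have hsupp : ∀ c : Equiv.Perm V, (f c).support = c.support.map σ1.toEmbedding := by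
    intro c
    have h : f c = σ1 * c⁻¹ * σ1⁻¹ := by rw [hinv1]
    rw [h, Equiv.Perm.support_conj, Equiv.Perm.support_inv]
  have hσ1mem : ∀ (c : Equiv.Perm V) (v : V), v ∈ c.support → σ1 v ∈ (f c).support := by
    intro c v hv
    rw [hsupp c, Finset.mem_map]
    exact ⟨v, hv, rfl⟩
  have hff : ∀ c : Equiv.Perm V, f (f c) = c := by
    intro c
    show σ1 * (σ1 * c⁻¹ * σ1)⁻¹ * σ1 = c
    simp only [mul_inv_rev, inv_inv, hinv1]
    rw [cancel1, cancel1']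
  have hmem : ∀ c ∈ π.cycleFactorsFinset, f c ∈ π.cycleFactorsFinset := by
    intro c hc
    rw [Equiv.Perm.mem_cycleFactorsFinset_iff] at hc ⊢
    constructor
    · have h : f c = σ1 * c⁻¹ * σ1⁻¹ := by rw [hinv1]
      rw [h]
      exact hc.1.inv.conj
    · intro a ha
      rw [hsupp c, Finset.mem_map] at ha
      obtain ⟨b, hb, rfl⟩ := ha
      show (σ1 * c⁻¹ * σ1) (σ1 b) = π (σ1 b)
      simp only [Equiv.Perm.mul_apply, h1.1]
      rw [hkey]
      congr 1
      have hb' : c⁻¹ b ∈ c.support := by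
        rwa [← Equiv.Perm.support_inv c, Equiv.Perm.apply_mem_support,
          Equiv.Perm.support_inv]
      have hpb : π (c⁻¹ b) = b := by rw [← hc.2 _ hb']; simp
      calc c⁻¹ b = π⁻¹ (π (c⁻¹ b)) := by simp
        _ = π⁻¹ b := by rw [hpb]
  have hπinv : ∀ d ∈ π.cycleFactorsFinset, ∀ w ∈ d.support, π w ∈ d.support := by
    intro d hd w hw
    rw [← (Equiv.Perm.mem_cycleFactorsFinset_iff.mp hd).2 w hw]
    exact Equiv.Perm.apply_mem_support.mpr hw
  refine ⟨f, fun c hc => ⟨hmem c hc, hff c, ?_, ?_⟩⟩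
  · -- individual routability
    intro hfc
    have hc2 := (Equiv.Perm.mem_cycleFactorsFinset_iff.mp hc).2
    have hS1 : ∀ v ∈ c.support, σ1 v ∈ c.support := by
      intro v hv
      have h := hσ1mem c v hv
      rwa [hfc] at h
    have hS2 : ∀ v ∈ c.support, σ2 v ∈ c.support := by
      intro v hv
      rw [hσ2eq]
      exact hπinv c hc _ (hS1 v hv)
    refine ⟨restrictPerm σ1 c.support h1.1 hS1, restrictPerm σ2 c.support h2.1 hS2,
      restrictPerm_step G σ1 _ h1.1 hS1 h1, restrictPerm_step G σ2 _ h2.1 hS2 h2,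
      ?_, ?_, ?_⟩
    · intro v hv
      rw [restrictPerm_apply] at hv
      by_contra h
      exact hv (if_neg h)
    · intro v hv
      rw [restrictPerm_apply] at hv
      by_contra h
      exact hv (if_neg h)
    · ext v
      simp only [Equiv.Perm.mul_apply, restrictPerm_apply]
      by_cases hv : v ∈ c.support
      · rw [if_pos hv, if_pos (hS1 v hv), hσ2eq, h1.1, hc2 v hv]
      · rw [if_neg hv, if_neg hv, eq_comm, ← Equiv.Perm.notMem_support]
        exact hv
  · -- mutual routability
    intro hfc
    have hc2 := (Equiv.Perm.mem_cycleFactorsFinset_iff.mp hc).2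
    have hfc2 := (Equiv.Perm.mem_cycleFactorsFinset_iff.mp (hmem c hc)).2
    have hdisj : _root_.Disjoint c.support (f c).support := by
      rw [← Equiv.Perm.disjoint_iff_disjoint_support]
      exact Equiv.Perm.cycleFactorsFinset_pairwise_disjoint π hc (hmem c hc) (Ne.symm hfc)
    set S : Finset V := c.support ∪ (f c).support with hSdef
    have hS1 : ∀ v ∈ S, σ1 v ∈ S := by
      intro v hv
      rcases Finset.mem_union.mp hv with h | h
      · exact Finset.mem_union_right _ (hσ1mem c v h)
      · refine Finset.mem_union_left _ ?_
        have := hσ1mem (f c) v h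
        rwa [hff c] at this
    have hS2 : ∀ v ∈ S, σ2 v ∈ S := by
      intro v hv
      rw [hσ2eq]
      rcases Finset.mem_union.mp hv with h | h
      · exact Finset.mem_union_right _ (hπinv _ (hmem c hc) _ (hσ1mem c v h))
      · refine Finset.mem_union_left _ ?_
        have h' := hσ1mem (f c) v h
        rw [hff c] at h'
        exact hπinv _ hc _ h'
    refine ⟨restrictPerm σ1 S h1.1 hS1, restrictPerm σ2 S h2.1 hS2,
      restrictPerm_step G σ1 _ h1.1 hS1 h1, restrictPerm_step G σ2 _ h2.1 hS2 h2,
      ?_, ?_, ?_⟩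
    · intro v hv
      rw [restrictPerm_apply] at hv ⊢
      have hvS : v ∈ S := by by_contra h; exact hv (if_neg h)
      rw [if_pos hvS]
      rcases Finset.mem_union.mp hvS with h | h
      · exact Or.inl ⟨h, hσ1mem c v h⟩
      · refine Or.inr ⟨h, ?_⟩
        have := hσ1mem (f c) v h
        rwa [hff c] at this
    · intro v hv
      rw [restrictPerm_apply] at hv ⊢
      have hvS : v ∈ S := by by_contra h; exact hv (if_neg h)
      rw [if_pos hvS]
      rcases Finset.mem_union.mp hvS with h | h
      · refine Or.inl ⟨h, ?_⟩
        rw [hσ2eq]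
        exact hπinv _ (hmem c hc) _ (hσ1mem c v h)
      · refine Or.inr ⟨h, ?_⟩
        rw [hσ2eq]
        have h' := hσ1mem (f c) v h
        rw [hff c] at h'
        exact hπinv _ hc _ h'
    · ext v
      simp only [Equiv.Perm.mul_apply, restrictPerm_apply]
      by_cases hv : v ∈ S
      · rw [if_pos hv, if_pos (hS1 v hv), hσ2eq, h1.1]
        rcases Finset.mem_union.mp hv with h | h
        · have hnot : v ∉ (f c).support := Finset.disjoint_left.mp hdisj h
          rw [Equiv.Perm.notMem_support.mp hnot, hc2 v h]
        · have h' : (f c) v = π v := hfc2 v h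
          have h'' : π v ∈ (f c).support := by
            rw [← h']; exact Equiv.Perm.apply_mem_support.mpr h
          have hnot : π v ∉ c.support := Finset.disjoint_right.mp hdisj h''
          rw [h', Equiv.Perm.notMem_support.mp hnot]
      · rw [if_neg hv, if_neg hv]
        have h1' : v ∉ c.support := fun h => hv (Finset.mem_union_left _ h)
        have h2' : v ∉ (f c).support := fun h => hv (Finset.mem_union_right _ h)
        rw [Equiv.Perm.notMem_support.mp h2', Equiv.Perm.notMem_support.mp h1']


lemma backward_dir (G : SimpleGraph V) (π : Equiv.Perm V)
    (f : Equiv.Perm V → Equiv.Perm V)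
    (hf : ∀ c ∈ π.cycleFactorsFinset, f c ∈ π.cycleFactorsFinset ∧ f (f c) = c ∧
      (f c = c → IndivRoutable2 G c) ∧ (f c ≠ c → MutuallyRoutable2 G c (f c))) :
    RoutableIn G π 2 := by
  classical
  letI : LinearOrder (Equiv.Perm V) :=
    LinearOrder.lift' (Fintype.equivFin (Equiv.Perm V)) (Equiv.injective _)
  set F := π.cycleFactorsFinset with hF
  set rep : Equiv.Perm V → Equiv.Perm V := fun c => min c (f c) with hrepdef
  have hrepmem : ∀ c ∈ F, rep c ∈ F := by
    intro c hc
    rcases min_choice c (f c) with h | h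
    · show min c (f c) ∈ F; rw [h]; exact hc
    · show min c (f c) ∈ F; rw [h]; exact (hf c hc).1
  have hrepf : ∀ c ∈ F, rep (f c) = rep c := by
    intro c hc
    show min (f c) (f (f c)) = min c (f c)
    rw [(hf c hc).2.1, min_comm]
  have hSrep : ∀ c ∈ F,
      (rep c).support ∪ (f (rep c)).support = c.support ∪ (f c).support := by
    intro c hc
    rcases min_choice c (f c) with h | h
    · show (min c (f c)).support ∪ (f (min c (f c))).support = _
      rw [h]
    · show (min c (f c)).support ∪ (f (min c (f c))).support = _
      rw [h, (hf c hc).2.1, Finset.union_comm]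
  -- existence of good witness pairs
  have hex : ∀ c, ∃ p : Equiv.Perm V × Equiv.Perm V, c ∈ F →
      (IsMatchingStep G p.1 ∧ IsMatchingStep G p.2 ∧
       (∀ v, p.1 v ≠ v → v ∈ c.support ∪ (f c).support) ∧
       (∀ v, p.2 v ≠ v → v ∈ c.support ∪ (f c).support) ∧
       (∀ v ∈ c.support ∪ (f c).support, p.2 (p.1 v) = π v)) := by
    intro c
    by_cases hc : c ∈ F
    swap
    · exact ⟨(1, 1), fun h => absurd h hc⟩
    obtain ⟨hfmem, hffc, hindiv, hmut⟩ := hf c hc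
    have hc2 := (Equiv.Perm.mem_cycleFactorsFinset_iff.mp hc).2
    by_cases h : f c = c
    · obtain ⟨σ1, σ2, hs1, hs2, m1, m2, hp⟩ := hindiv h
      refine ⟨(σ1, σ2), fun _ => ⟨hs1, hs2, ?_, ?_, ?_⟩⟩
      · intro v hv; exact Finset.mem_union_left _ (m1 v hv)
      · intro v hv; exact Finset.mem_union_left _ (m2 v hv)
      · intro v hv
        have hvc : v ∈ c.support := by
          rcases Finset.mem_union.mp hv with hv | hv
          · exact hv
          · rwa [h] at hv
        have : (σ2 * σ1) v = c v := by rw [hp]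
        rw [Equiv.Perm.mul_apply] at this
        rw [this, hc2 v hvc]
    · obtain ⟨σ1, σ2, hs1, hs2, m1, m2, hp⟩ := hmut h
      have hfc2 := (Equiv.Perm.mem_cycleFactorsFinset_iff.mp hfmem).2
      have hdisj : _root_.Disjoint c.support (f c).support := by
        rw [← Equiv.Perm.disjoint_iff_disjoint_support]
        exact Equiv.Perm.cycleFactorsFinset_pairwise_disjoint π hc hfmem (fun he => h he.symm)
      refine ⟨(σ1, σ2), fun _ => ⟨hs1, hs2, ?_, ?_, ?_⟩⟩
      · intro v hv
        rcases m1 v hv with ⟨h1, _⟩ | ⟨h1, _⟩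
        · exact Finset.mem_union_left _ h1
        · exact Finset.mem_union_right _ h1
      · intro v hv
        rcases m2 v hv with ⟨h1, _⟩ | ⟨h1, _⟩
        · exact Finset.mem_union_left _ h1
        · exact Finset.mem_union_right _ h1
      · intro v hv
        have hmul : (σ2 * σ1) v = (c * f c) v := by rw [hp]
        rw [Equiv.Perm.mul_apply] at hmul
        rw [hmul, Equiv.Perm.mul_apply]
        rcases Finset.mem_union.mp hv with hv | hv
        · have hnot : v ∉ (f c).support := Finset.disjoint_left.mp hdisj hv
          rw [Equiv.Perm.notMem_support.mp hnot, hc2 v hv]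
        · have h' : (f c) v = π v := hfc2 v hv
          have h'' : π v ∈ (f c).support := by
            rw [← h']; exact Equiv.Perm.apply_mem_support.mpr hv
          have hnot : π v ∉ c.support := Finset.disjoint_right.mp hdisj h''
          rw [h', Equiv.Perm.notMem_support.mp hnot]
  choose W hW using hex
  have hcycF : ∀ v ∈ π.support, π.cycleOf v ∈ F := fun v hv =>
    Equiv.Perm.cycleOf_mem_cycleFactorsFinset_iff.mpr hv
  have hvc : ∀ v ∈ π.support, v ∈ (π.cycleOf v).support := by
    intro v hv
    rw [Equiv.Perm.mem_support, Equiv.Perm.cycleOf_apply_self]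
    exact Equiv.Perm.mem_support.mp hv
  have htrans : ∀ v ∈ π.support,
      ∀ w ∈ (rep (π.cycleOf v)).support ∪ (f (rep (π.cycleOf v))).support,
      w ∈ π.support ∧ rep (π.cycleOf w) = rep (π.cycleOf v) := by
    intro v hv w hw
    have hcF : π.cycleOf v ∈ F := hcycF v hv
    rw [hSrep _ hcF] at hw
    rcases Finset.mem_union.mp hw with h | h
    · have hwπ : w ∈ π.support := Equiv.Perm.mem_cycleFactorsFinset_support_le hcF h
      have heq : π.cycleOf v = π.cycleOf w := Equiv.Perm.cycle_is_cycleOf h hcF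
      exact ⟨hwπ, by rw [← heq]⟩
    · have hfcF : f (π.cycleOf v) ∈ F := (hf _ hcF).1
      have hwπ : w ∈ π.support := Equiv.Perm.mem_cycleFactorsFinset_support_le hfcF h
      have heq : f (π.cycleOf v) = π.cycleOf w := Equiv.Perm.cycle_is_cycleOf h hfcF
      exact ⟨hwπ, by rw [← heq, hrepf _ hcF]⟩
  -- the two global steps
  have hinvol1 : Function.Involutive
      (fun v => if v ∈ π.support then (W (rep (π.cycleOf v))).1 v else v) := by
    intro v
    dsimp only
    by_cases hv : v ∈ π.support
    · rw [if_pos hv]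
      have hP := hW (rep (π.cycleOf v)) (hrepmem _ (hcycF v hv))
      rcases eq_or_ne ((W (rep (π.cycleOf v))).1 v) v with h | h
      · rw [h, if_pos hv, h]
      · have hval : (W (rep (π.cycleOf v))).1 ((W (rep (π.cycleOf v))).1 v) = v := hP.1.1 v
        have htmoved : (W (rep (π.cycleOf v))).1 ((W (rep (π.cycleOf v))).1 v)
            ≠ (W (rep (π.cycleOf v))).1 v := by rw [hval]; exact fun he => h he.symm
        have htS := hP.2.2.1 _ htmoved
        obtain ⟨htπ, hrepeq⟩ := htrans v hv _ htS
        rw [if_pos htπ, hrepeq, hval]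
    · rw [if_neg hv, if_neg hv]
  have hinvol2 : Function.Involutive
      (fun v => if v ∈ π.support then (W (rep (π.cycleOf v))).2 v else v) := by
    intro v
    dsimp only
    by_cases hv : v ∈ π.support
    · rw [if_pos hv]
      have hP := hW (rep (π.cycleOf v)) (hrepmem _ (hcycF v hv))
      rcases eq_or_ne ((W (rep (π.cycleOf v))).2 v) v with h | h
      · rw [h, if_pos hv, h]
      · have hval : (W (rep (π.cycleOf v))).2 ((W (rep (π.cycleOf v))).2 v) = v := hP.2.1.1 v
        have htmoved : (W (rep (π.cycleOf v))).2 ((W (rep (π.cycleOf v))).2 v)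
            ≠ (W (rep (π.cycleOf v))).2 v := by rw [hval]; exact fun he => h he.symm
        have htS := hP.2.2.2.1 _ htmoved
        obtain ⟨htπ, hrepeq⟩ := htrans v hv _ htS
        rw [if_pos htπ, hrepeq, hval]
    · rw [if_neg hv, if_neg hv]
  set sg1 : Equiv.Perm V := Function.Involutive.toPerm _ hinvol1 with hsg1
  set sg2 : Equiv.Perm V := Function.Involutive.toPerm _ hinvol2 with hsg2
  have hsg1app : ∀ v, sg1 v = if v ∈ π.support then (W (rep (π.cycleOf v))).1 v else v :=
    fun v => rfl
  have hsg2app : ∀ v, sg2 v = if v ∈ π.support then (W (rep (π.cycleOf v))).2 v else v :=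
    fun v => rfl
  have hstep1 : IsMatchingStep G sg1 := by
    constructor
    · intro v; rw [hsg1app, hsg1app]; exact hinvol1 v
    · intro v hv
      rw [hsg1app] at hv ⊢
      by_cases h : v ∈ π.support
      · rw [if_pos h] at hv ⊢
        exact (hW (rep (π.cycleOf v)) (hrepmem _ (hcycF v h))).1.2 v hv
      · exact absurd (if_neg h) hv
  have hstep2 : IsMatchingStep G sg2 := by
    constructor
    · intro v; rw [hsg2app, hsg2app]; exact hinvol2 v
    · intro v hv
      rw [hsg2app] at hv ⊢
      by_cases h : v ∈ π.support
      · rw [if_pos h] at hv ⊢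
        exact (hW (rep (π.cycleOf v)) (hrepmem _ (hcycF v h))).2.1.2 v hv
      · exact absurd (if_neg h) hv
  have hprodsg : sg2 * sg1 = π := by
    ext v
    rw [Equiv.Perm.mul_apply, hsg1app, hsg2app]
    by_cases hv : v ∈ π.support
    · rw [if_pos hv]
      have hP := hW (rep (π.cycleOf v)) (hrepmem _ (hcycF v hv))
      have hvS : v ∈ (rep (π.cycleOf v)).support ∪ (f (rep (π.cycleOf v))).support := by
        rw [hSrep _ (hcycF v hv)]
        exact Finset.mem_union_left _ (hvc v hv)
      have hval : (W (rep (π.cycleOf v))).2 ((W (rep (π.cycleOf v))).1 v) = π v :=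
        hP.2.2.2.2 v hvS
      rcases eq_or_ne ((W (rep (π.cycleOf v))).1 v) v with h | h
      · rw [h]
        rw [if_pos hv]
        rw [h] at hval
        exact hval
      · have hback : (W (rep (π.cycleOf v))).1 ((W (rep (π.cycleOf v))).1 v) = v :=
          hP.1.1 v
        have htmoved : (W (rep (π.cycleOf v))).1 ((W (rep (π.cycleOf v))).1 v)
            ≠ (W (rep (π.cycleOf v))).1 v := by rw [hback]; exact fun he => h he.symm
        have htS := hP.2.2.1 _ htmoved
        obtain ⟨htπ, hrepeq⟩ := htrans v hv _ htS
        rw [if_pos htπ, hrepeq, hval]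
    · rw [if_neg hv, if_neg hv, eq_comm]
      exact Equiv.Perm.notMem_support.mp hv
  refine ⟨[sg1, sg2], rfl, ?_, ?_⟩
  · intro σ hσ
    simp only [List.mem_cons, List.mem_singleton, List.not_mem_nil, or_false] at hσ
    rcases hσ with rfl | rfl
    · exact hstep1
    · exact hstep2
  · simp only [List.reverse_cons, List.reverse_nil, List.nil_append, List.cons_append,
      List.prod_cons, List.prod_nil, mul_one]
    exact hprodsg

end RoutingAux

/-- `rt(G, π) = 2` iff the cycle graph of `π` (vertices: the nontrivial cycles of `π`,
a loop at each individually 2-step-routable cycle, an edge between each mutually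
2-step-routable pair) has a perfect matching in which loops may cover their own vertex;
such a matching is encoded as an involution `f` of the set of cycles. -/
theorem routingTime_eq_two_iff_perfect_matching
    {V : Type*} [Fintype V] [DecidableEq V] (G : SimpleGraph V) (hG : G.Connected)
    (π : Equiv.Perm V) (hπ : ¬ RoutableIn G π 1) :
    routingTime G π = 2 ↔
      ∃ f : Equiv.Perm V → Equiv.Perm V,
        ∀ c ∈ π.cycleFactorsFinset, f c ∈ π.cycleFactorsFinset ∧ f (f c) = c ∧
          (f c = c → IndivRoutable2 G c) ∧ (f c ≠ c → MutuallyRoutable2 G c (f c)) := by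
  classical
  have hrt : routingTime G π = sInf {k | RoutableIn G π k} := rfl
  have h0 : ¬ RoutableIn G π 0 := by
    rintro ⟨L, hL, _, hp⟩
    rw [List.length_eq_zero_iff] at hL
    subst hL
    simp only [List.reverse_nil, List.prod_nil] at hp
    refine hπ ⟨[1], rfl, ?_, by simp [← hp]⟩
    intro σ hσ
    simp only [List.mem_singleton] at hσ
    subst hσ
    exact ⟨fun v => rfl, fun v h => absurd rfl h⟩
  constructor
  · intro h
    rw [hrt] at h
    have hne : {k | RoutableIn G π k}.Nonempty := by
      by_contra h'
      rw [Set.not_nonempty_iff_eq_empty] at h'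
      rw [h', Nat.sInf_empty] at h
      exact absurd h (by norm_num)
    have h2 : RoutableIn G π 2 := by
      have := Nat.sInf_mem hne
      rwa [h] at this
    obtain ⟨L, hL, hsteps, hp⟩ := h2
    obtain ⟨a, b, rfl⟩ := List.length_eq_two.mp hL
    have hp' : b * a = π := by simpa using hp
    exact RoutingAux.forward_dir G π a b (hsteps a (by simp)) (hsteps b (by simp)) hp'
  · rintro ⟨f, hf⟩
    have h2 : RoutableIn G π 2 := RoutingAux.backward_dir G π f hf
    rw [hrt]
    refine le_antisymm (Nat.sInf_le h2) ?_
    by_contra h'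
    push_neg at h'
    have hm := Nat.sInf_mem (⟨2, h2⟩ : {k | RoutableIn G π k}.Nonempty)
    have hcase : sInf {k | RoutableIn G π k} = 0 ∨ sInf {k | RoutableIn G π k} = 1 := by
      omega
    rcases hcase with he | he
    · rw [he] at hm; exact h0 hm
    · rw [he] at hm; exact hπ hm
end

section
/- For a connected graph G with at least 3 vertices, the routing number rt(G) equals 2 if and only if G is a complete graph. -/
/-!
A matching step is an involution moving each vertex to itself or to a neighbour. If `ab` is not an
edge, the transposition `(a b)` is not a product of two matching steps: the first cannot fix `a`
(the second would then swap `a` and `b`), so it sends `a` to a neighbour `w ≠ b`, and then the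
second would have to send `a` to `w` and `w` to `b`. Hence `rt(G, (a b)) ≥ 3`. Conversely, every
permutation is a product of two involutions (on each cycle, two reflections whose composite is the
rotation), and in the complete graph every involution is a matching step, so `rt(Kₙ) ≤ 2`, with
equality for `n ≥ 3` because a 3-cycle is not an involution.
-/

namespace Equiv.Perm

variable {α : Type*}

theorem zpow_sub_apply_eq_of_zpow_apply_eq {σ : Perm α} {x : α} {a b : ℤ} (c : ℤ)
    (h : (σ ^ a) x = (σ ^ b) x) : (σ ^ (c - a)) x = (σ ^ (c - b)) x := by
  have key := congrArg (σ ^ (c - a - b)) h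
  rw [← mul_apply, ← mul_apply, ← zpow_add, ← zpow_add] at key
  rwa [show c - a - b + a = c - b by ring, show c - a - b + b = c - a by ring, eq_comm] at key

theorem exists_involutive_mul_involutive_eq (σ : Perm α) :
    ∃ ρ τ : Perm α, Function.Involutive ρ ∧ Function.Involutive τ ∧ ρ * τ = σ := by
  set base : α → α := fun v => (Quotient.mk (SameCycle.setoid σ) v).out
  have base_sameCycle (v : α) : σ.SameCycle (base v) v :=
    Quotient.mk_out (s := SameCycle.setoid σ) v
  have base_eq {v w : α} (h : σ.SameCycle v w) : base v = base w :=
    congrArg Quotient.out (Quotient.sound (s := SameCycle.setoid σ) h)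
  choose e he using fun v => base_sameCycle v
  -- `reflect c` maps `σ ^ i (base v)` to `σ ^ (c - i) (base v)` on the cycle of `v`.
  let reflect (c : ℤ) (v : α) : α := (σ ^ (c - e v)) (base v)
  have reflect_reflect (c d : ℤ) (v : α) : reflect c (reflect d v) = (σ ^ (c - d)) v := by
    have hbase : base (reflect d v) = base v :=
      (base_eq ((base_sameCycle v).symm.trans ⟨d - e v, rfl⟩)).symm
    have hexp : (σ ^ e (reflect d v)) (base v) = reflect d v := by
      rw [← hbase]; exact he _
    calc reflect c (reflect d v) = (σ ^ (c - (d - e v))) (base v) := by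
          rw [← zpow_sub_apply_eq_of_zpow_apply_eq c hexp, ← hbase]
      _ = (σ ^ (c - d)) ((σ ^ e v) (base v)) := by
          rw [← mul_apply, ← zpow_add, sub_sub_eq_add_sub, add_sub_right_comm]
      _ = (σ ^ (c - d)) v := by rw [he]
  have reflect_involutive (c : ℤ) : Function.Involutive (reflect c) := fun v => by
    rw [reflect_reflect, sub_self, zpow_zero, one_apply]
  refine ⟨(reflect_involutive 1).toPerm, (reflect_involutive 0).toPerm,
    reflect_involutive 1, reflect_involutive 0, Equiv.ext fun v => ?_⟩
  simp only [mul_apply, Function.Involutive.coe_toPerm, reflect_reflect, sub_zero, zpow_one]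

end Equiv.Perm

section Routing

variable {V : Type*} {G : SimpleGraph V} {π σ τ : Equiv.Perm V} {k m : ℕ}

theorem IsMatchingStep.involutive (h : IsMatchingStep G σ) : Function.Involutive σ := h.1

theorem isMatchingStep_top_iff : IsMatchingStep ⊤ σ ↔ Function.Involutive σ :=
  ⟨IsMatchingStep.involutive, fun h => ⟨h, fun _ hv => (SimpleGraph.top_adj _ _).mpr hv.symm⟩⟩

theorem isMatchingStep_swap [DecidableEq V] {a b : V} (h : G.Adj a b) :
    IsMatchingStep G (Equiv.swap a b) := by
  refine ⟨Equiv.swap_apply_self a b, fun v hv => ?_⟩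
  rcases eq_or_ne v a with rfl | hva
  · rwa [Equiv.swap_apply_left]
  rcases eq_or_ne v b with rfl | hvb
  · rw [Equiv.swap_apply_right]; exact h.symm
  · exact absurd (Equiv.swap_apply_of_ne_of_ne hva hvb) hv

theorem routableIn_zero_iff : RoutableIn G π 0 ↔ π = 1 := by
  simp [RoutableIn, eq_comm]

theorem routableIn_one_iff : RoutableIn G π 1 ↔ IsMatchingStep G π := by
  simp [RoutableIn, List.length_eq_one_iff]

theorem RoutableIn.mul (hσ : RoutableIn G σ k) (hτ : RoutableIn G τ m) :
    RoutableIn G (τ * σ) (k + m) := by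
  obtain ⟨L, rfl, hL, rfl⟩ := hσ
  obtain ⟨M, rfl, hM, rfl⟩ := hτ
  refine ⟨L ++ M, List.length_append, fun ρ hρ => ?_, by simp⟩
  rcases List.mem_append.mp hρ with hρ | hρ
  exacts [hL ρ hρ, hM ρ hρ]

theorem routableIn_add_iff :
    RoutableIn G π (k + m) ↔ ∃ σ τ, RoutableIn G σ k ∧ RoutableIn G τ m ∧ τ * σ = π := by
  refine ⟨fun ⟨L, hlen, hL, hprod⟩ => ?_, fun ⟨σ, τ, hσ, hτ, h⟩ => h ▸ hσ.mul hτ⟩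
  refine ⟨(L.take k).reverse.prod, (L.drop k).reverse.prod,
    ⟨L.take k, by simp [hlen], fun ρ hρ => hL ρ (List.mem_of_mem_take hρ), rfl⟩,
    ⟨L.drop k, by simp [hlen], fun ρ hρ => hL ρ (List.mem_of_mem_drop hρ), rfl⟩, ?_⟩
  rw [← List.prod_append, ← List.reverse_append, List.take_append_drop, hprod]

theorem routableIn_two_iff :
    RoutableIn G π 2 ↔ ∃ σ τ, IsMatchingStep G σ ∧ IsMatchingStep G τ ∧ τ * σ = π := by
  simp only [← routableIn_one_iff, ← routableIn_add_iff]

theorem SimpleGraph.Reachable.exists_routableIn_swap [DecidableEq V] {u v : V}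
    (h : G.Reachable u v) : ∃ k, RoutableIn G (Equiv.swap u v) k := by
  obtain ⟨p⟩ := h
  induction p with
  | nil => exact ⟨0, routableIn_zero_iff.mpr (Equiv.swap_self _)⟩
  | @cons x y z hxy _ ih =>
    rcases eq_or_ne x z with rfl | hxz
    · exact ⟨0, routableIn_zero_iff.mpr (Equiv.swap_self _)⟩
    rcases eq_or_ne y z with rfl | hyz
    · exact ⟨1, routableIn_one_iff.mpr (isMatchingStep_swap hxy)⟩
    obtain ⟨k, hk⟩ := ih
    have hstep := routableIn_one_iff.mpr (isMatchingStep_swap hxy)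
    have hconj : Equiv.swap x y * Equiv.swap y z * Equiv.swap x y = Equiv.swap x z := by
      simpa [Equiv.swap_apply_of_ne_of_ne hxz.symm hyz.symm] using
        (Equiv.swap_apply_apply (Equiv.swap x y) y z).symm
    exact ⟨1 + k + 1, hconj ▸ (hstep.mul hk).mul hstep⟩

theorem IsMatchingStep.adj_of_mul_eq_swap [DecidableEq V] {a b : V} (hσ : IsMatchingStep G σ)
    (hτ : IsMatchingStep G τ) (hab : a ≠ b) (h : τ * σ = Equiv.swap a b) : G.Adj a b := by
  have hτσ (v : V) : τ (σ v) = Equiv.swap a b v := by rw [← h]; rfl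
  by_contra hna
  set w := σ a
  have hwa : w ≠ a := fun hwa => by
    have hτa : τ a = b := by rw [← hwa, hτσ, Equiv.swap_apply_left]
    exact hna (hτa ▸ hτ.2 a (hτa ▸ hab.symm))
  have haw : G.Adj a w := hσ.2 a hwa
  have hwb : w ≠ b := fun hwb => hna (hwb ▸ haw)
  have hτa : τ a = w := by
    rw [← hσ.involutive a, hτσ, Equiv.swap_apply_of_ne_of_ne hwa hwb]
  have hτw : τ w = b := by rw [hτσ, Equiv.swap_apply_left]
  exact hab (τ.injective (hτa.trans (hτ.involutive w ▸ congrArg τ hτw)))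

theorem three_le_of_routableIn_swap [DecidableEq V] {a b : V} (hab : a ≠ b)
    (hna : ¬ G.Adj a b) (h : RoutableIn G (Equiv.swap a b) k) : 3 ≤ k := by
  by_contra! hk
  interval_cases k
  · exact hab (by simpa using congrArg (· a) (routableIn_zero_iff.mp h).symm)
  · exact hna (by simpa using (routableIn_one_iff.mp h).2 a (by simpa using hab.symm))
  · obtain ⟨σ, τ, hσ, hτ, hτσ⟩ := routableIn_two_iff.mp h
    exact hna (hσ.adj_of_mul_eq_swap hτ hab hτσ)

theorem two_le_of_routableIn (hπ : ¬ Function.Involutive π) (h : RoutableIn G π k) : 2 ≤ k := by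
  by_contra! hk
  interval_cases k
  · exact hπ (by simp [routableIn_zero_iff.mp h, Function.Involutive])
  · exact hπ (routableIn_one_iff.mp h).involutive

theorem routableIn_top_two (π : Equiv.Perm V) : RoutableIn ⊤ π 2 := by
  obtain ⟨ρ, τ, hρ, hτ, rfl⟩ := π.exists_involutive_mul_involutive_eq
  exact routableIn_two_iff.mpr ⟨τ, ρ, isMatchingStep_top_iff.mpr hτ,
    isMatchingStep_top_iff.mpr hρ, rfl⟩

end Routing

section RoutingNumber

variable {V : Type*} {G : SimpleGraph V} {π : Equiv.Perm V} {n : ℕ}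

theorem routingTime_le {k : ℕ} (h : RoutableIn G π k) : routingTime G π ≤ k := Nat.sInf_le h

theorem le_routingTime (hπ : ∃ k, RoutableIn G π k) (h : ∀ k, RoutableIn G π k → n ≤ k) :
    n ≤ routingTime G π :=
  le_csInf hπ h

theorem routingTime_le_routingNumber [Finite V] (π : Equiv.Perm V) :
    routingTime G π ≤ routingNumber G :=
  le_ciSup (Set.finite_range _).bddAbove π

theorem routingNumber_le (h : ∀ π, routingTime G π ≤ n) : routingNumber G ≤ n :=
  ciSup_le h

theorem three_le_routingNumber_of_ne_top [Finite V] (hG : G.Connected) (hne : G ≠ ⊤) :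
    3 ≤ routingNumber G := by
  classical
  obtain ⟨a, b, hab, hna⟩ := SimpleGraph.ne_top_iff_exists_not_adj.mp hne
  calc 3 ≤ routingTime G (Equiv.swap a b) :=
        le_routingTime (hG.preconnected a b).exists_routableIn_swap
          fun _ => three_le_of_routableIn_swap hab hna
    _ ≤ routingNumber G := routingTime_le_routingNumber _

theorem routingNumber_top [Fintype V] (hcard : 2 < Fintype.card V) :
    routingNumber (⊤ : SimpleGraph V) = 2 := by
  classical
  obtain ⟨a, b, c, hab, hac, hbc⟩ := Fintype.two_lt_card_iff.mp hcard
  have hcycle : ¬ Function.Involutive (Equiv.swap a b * Equiv.swap b c) := fun h => by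
    simpa [Equiv.swap_apply_of_ne_of_ne hab hac, hbc] using h c
  refine le_antisymm (routingNumber_le fun π => routingTime_le (routableIn_top_two π)) ?_
  calc 2 ≤ routingTime ⊤ (Equiv.swap a b * Equiv.swap b c) :=
        le_routingTime ⟨2, routableIn_top_two _⟩ fun _ => two_le_of_routableIn hcycle
    _ ≤ routingNumber ⊤ := routingTime_le_routingNumber _

end RoutingNumber

theorem routingNumber_eq_two_iff_complete_general
    {V : Type*} [Fintype V] (G : SimpleGraph V)
    (hG : G.Connected) (hcard : 3 ≤ Fintype.card V) :
    routingNumber G = 2 ↔ G = ⊤ := by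
  refine ⟨fun h => ?_, fun h => h ▸ routingNumber_top hcard⟩
  by_contra hne
  have := three_le_routingNumber_of_ne_top hG hne
  omega

/-- For a connected graph on at least 3 vertices, the routing number equals 2
iff the graph is complete. -/
theorem routingNumber_eq_two_iff_complete
    {V : Type*} [Fintype V] [DecidableEq V] (G : SimpleGraph V)
    (hG : G.Connected) (hcard : 3 ≤ Fintype.card V) :
    routingNumber G = 2 ↔ G = ⊤ :=
  routingNumber_eq_two_iff_complete_general G hG hcard
end

section
/- For every permutation π of the vertices of the complete graph K_n, rt(K_n, π) ≤ 2: every permutation can be routed in at most 2 matching steps on the complete graph. -/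
section Aux

open Equiv Equiv.Perm

variable {α : Type*} [Fintype α] [DecidableEq α]

set_option linter.unusedSectionVars false in
private lemma shift_aux (σ : Equiv.Perm α) (x : α) {j k : ℤ}
    (h : (σ ^ j) x = (σ ^ k) x) (m : ℤ) : (σ ^ (m - j)) x = (σ ^ (m - k)) x := by
  have h1 : (σ ^ (m - j - k)) ((σ ^ j) x) = (σ ^ (m - j - k)) ((σ ^ k) x) := by rw [h]
  rw [← Equiv.Perm.mul_apply, ← Equiv.Perm.mul_apply, ← zpow_add, ← zpow_add] at h1
  have e1 : (m - j - k + j : ℤ) = m - k := by ring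
  have e2 : (m - j - k + k : ℤ) = m - j := by ring
  rw [e1, e2] at h1
  exact h1.symm

private lemma exists_two_involutions (σ : Equiv.Perm α) :
    ∃ a b : Equiv.Perm α, a * a = 1 ∧ b * b = 1 ∧
      a.support ⊆ σ.support ∧ b.support ⊆ σ.support ∧ a * b = σ := by
  induction σ using Equiv.Perm.cycle_induction_on with
  | base_one =>
    exact ⟨1, 1, one_mul 1, one_mul 1, le_refl _, le_refl _, one_mul 1⟩
  | base_cycles σ hσ =>
    obtain ⟨x, hx, hcyc⟩ := hσ
    classical
    set f : α → α := fun v => if h : ∃ k : ℤ, (σ ^ k) x = v then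
      (σ ^ (-(Classical.choose h))) x else v with hf
    have fnorb : ∀ v, (¬ ∃ k : ℤ, (σ ^ k) x = v) → f v = v := by
      intro v h; simp only [hf, dif_neg h]
    have key : ∀ (k : ℤ) (v : α), (σ ^ k) x = v → f v = (σ ^ (-k : ℤ)) x := by
      intro k v hv
      have h : ∃ j : ℤ, (σ ^ j) x = v := ⟨k, hv⟩
      simp only [hf, dif_pos h]
      have hj : (σ ^ (Classical.choose h)) x = v := Classical.choose_spec h
      have := shift_aux σ x (hj.trans hv.symm) 0
      simpa [zero_sub] using this
    have hfinv : Function.Involutive f := by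
      intro v
      by_cases h : ∃ k : ℤ, (σ ^ k) x = v
      · obtain ⟨k, hk⟩ := h
        rw [key k v hk, key (-k) _ rfl, neg_neg, hk]
      · rw [fnorb v h, fnorb v h]
    set b : Equiv.Perm α := hfinv.toPerm with hb
    have hbv : ∀ v, b v = f v := fun v => rfl
    have hbb : b * b = 1 := by
      ext v
      simp [hbv, Equiv.Perm.mul_apply, hfinv v]
    set a : Equiv.Perm α := σ * b with ha
    have hav : ∀ v, a v = σ (f v) := fun v => rfl
    have horb_supp : ∀ (k : ℤ), (σ ^ k) x ∈ σ.support := by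
      intro k
      exact Equiv.Perm.zpow_apply_mem_support.mpr (Equiv.Perm.mem_support.mpr hx)
    have haa : a * a = 1 := by
      ext v
      simp only [Equiv.Perm.mul_apply, Equiv.Perm.one_apply, hav]
      by_cases h : ∃ k : ℤ, (σ ^ k) x = v
      · obtain ⟨k, hk⟩ := h
        rw [key k v hk]
        have h1 : σ ((σ ^ (-k : ℤ)) x) = (σ ^ (1 - k : ℤ)) x := by
          rw [← Equiv.Perm.mul_apply, ← zpow_one_add, sub_eq_add_neg]
        rw [h1, key (1 - k) _ rfl]
        have h2 : σ ((σ ^ (-(1 - k) : ℤ)) x) = (σ ^ (k : ℤ)) x := by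
          rw [← Equiv.Perm.mul_apply, ← zpow_one_add]
          congr 1
          ring
        rw [h2, hk]
      · have hsv : σ v = v := by
          by_contra hne
          obtain ⟨i, hi⟩ := hcyc hne
          exact h ⟨i, hi⟩
        rw [fnorb v h, hsv, fnorb v h, hsv]
    have hbsupp : b.support ⊆ σ.support := by
      intro v hv
      rw [Equiv.Perm.mem_support, hbv] at hv
      by_cases h : ∃ k : ℤ, (σ ^ k) x = v
      · obtain ⟨k, hk⟩ := h
        rw [← hk]
        exact horb_supp k
      · exact absurd (fnorb v h) hv
    have hasupp : a.support ⊆ σ.support := by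
      intro v hv
      rw [Equiv.Perm.mem_support, hav] at hv
      by_contra hns
      rw [Equiv.Perm.notMem_support] at hns
      by_cases h : ∃ k : ℤ, (σ ^ k) x = v
      · obtain ⟨k, hk⟩ := h
        exact (Equiv.Perm.notMem_support.mpr hns) (hk ▸ horb_supp k)
      · rw [fnorb v h, hns] at hv
        exact hv rfl
    refine ⟨a, b, haa, hbb, hasupp, hbsupp, ?_⟩
    rw [ha, mul_assoc, hbb, mul_one]
  | induction_disjoint σ τ hd hc ih1 ih2 =>
    obtain ⟨a, b, haa, hbb, has, hbs, hab⟩ := ih1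
    obtain ⟨c, d, hcc, hdd, hcs, hds, hcd⟩ := ih2
    have hdsupp : _root_.Disjoint σ.support τ.support :=
      Equiv.Perm.disjoint_iff_disjoint_support.mp hd
    have dis : ∀ p q : Equiv.Perm α, p.support ⊆ σ.support → q.support ⊆ τ.support →
        Commute p q := by
      intro p q hp hq
      exact Equiv.Perm.Disjoint.commute
        (Equiv.Perm.disjoint_iff_disjoint_support.mpr (hdsupp.mono hp hq))
    have hac := dis a c has hcs
    have had := dis a d has hds
    have hbc := dis b c hbs hcs
    have hbd := dis b d hbs hds
    refine ⟨a * c, b * d, ?_, ?_, ?_, ?_, ?_⟩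
    · calc a * c * (a * c) = a * (c * a) * c := by group
        _ = a * (a * c) * c := by rw [hac.eq]
        _ = (a * a) * (c * c) := by group
        _ = 1 := by rw [haa, hcc, one_mul]
    · calc b * d * (b * d) = b * (d * b) * d := by group
        _ = b * (b * d) * d := by rw [hbd.eq]
        _ = (b * b) * (d * d) := by group
        _ = 1 := by rw [hbb, hdd, one_mul]
    · refine (Equiv.Perm.support_mul_le a c).trans ?_
      rw [hd.support_mul]
      exact Finset.union_subset_union has hcs
    · refine (Equiv.Perm.support_mul_le b d).trans ?_
      rw [hd.support_mul]
      exact Finset.union_subset_union hbs hds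
    · calc a * c * (b * d) = a * (c * b) * d := by group
        _ = a * (b * c) * d := by rw [hbc.eq]
        _ = (a * b) * (c * d) := by group
        _ = σ * τ := by rw [hab, hcd]

end Aux

/-- Every permutation of the vertices of the complete graph can be routed in at
most 2 matching steps. -/
theorem routingTime_completeGraph_le_two (n : ℕ) (π : Equiv.Perm (Fin n)) :
    routingTime (⊤ : SimpleGraph (Fin n)) π ≤ 2 := by
  obtain ⟨a, b, haa, hbb, -, -, hab⟩ := exists_two_involutions π
  have step : ∀ c : Equiv.Perm (Fin n), c * c = 1 →
      IsMatchingStep (⊤ : SimpleGraph (Fin n)) c := by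
    intro c hcc
    constructor
    · intro v
      have : (c * c) v = (1 : Equiv.Perm (Fin n)) v := by rw [hcc]
      simpa [Equiv.Perm.mul_apply] using this
    · intro v hv
      simp only [SimpleGraph.top_adj]
      exact Ne.symm hv
  apply Nat.sInf_le
  refine ⟨[b, a], rfl, ?_, ?_⟩
  · intro s hs
    have h2 : s = b ∨ s = a := by simpa using hs
    rcases h2 with rfl | rfl
    · exact step _ hbb
    · exact step _ haa
  · simpa using hab
end

section
/- On the 6-cycle (hexagon) with antipodal vertices a and b, the permutation swapping the pebbles at a and b and fixing the other four vertices satisfies rt(C_6, (a b)) = 3; moreover, in any 3-step routing, either all intermediate positions of both pebbles lie on the left a–b path, or all lie on the right a–b path. -/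
/-!
A matching step moves every pebble by graph distance at most one, so the pebble at `0` needs
three steps to reach the antipode `3`, and in three steps both pebbles must follow geodesics.
If they took different sides, they would rotate in the same direction; then the pebble at `1`
(or `5`) is swapped onto `0` in the first step, must wait there in the second because both
neighbours of `0` are busy, and is swapped onto `5` (or `1`) in the third, so it does not
return home.
-/

open SimpleGraph

section Routing

variable {V : Type*} {G : SimpleGraph V}

namespace IsMatchingStep

variable {σ : Equiv.Perm V}

theorem apply_eq_comm (h : IsMatchingStep G σ) {v w : V} : σ v = w ↔ σ w = v :=
  ⟨fun e => e ▸ h.1 v, fun e => e ▸ h.1 w⟩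

theorem edist_apply_le_one (h : IsMatchingStep G σ) (v : V) : G.edist v (σ v) ≤ 1 := by
  rw [edist_le_one_iff_adj_or_eq]
  by_cases hv : σ v = v
  · exact Or.inr hv.symm
  · exact Or.inl (h.2 v hv)

theorem apply_eq_self_of_forall_adj (h : IsMatchingStep G σ) {v : V}
    (hv : ∀ w, G.Adj v w → σ w ≠ v) : σ v = v := by
  by_contra hne
  exact hv _ (h.2 v hne) (h.1 v)

theorem apply_apply_apply_eq_of_neighbors_busy {σ₁ σ₂ σ₃ : Equiv.Perm V}
    (h₁ : IsMatchingStep G σ₁) (h₂ : IsMatchingStep G σ₂) (h₃ : IsMatchingStep G σ₃)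
    {u p q : V} (hu : ∀ w, G.Adj u w → w = p ∨ w = q) (h₁u : σ₁ u = p) (h₂p : σ₂ p ≠ u)
    (h₂q : σ₂ q ≠ u) (h₃q : σ₃ q = u) : σ₃ (σ₂ (σ₁ p)) = q := by
  have h₂u : σ₂ u = u := h₂.apply_eq_self_of_forall_adj fun w hw => by
    rcases hu w hw with rfl | rfl <;> assumption
  rw [h₁.apply_eq_comm.mp h₁u, h₂u, h₃.apply_eq_comm.mp h₃q]

end IsMatchingStep

theorem RoutableIn.edist_apply_le {π : Equiv.Perm V} {k : ℕ} (h : RoutableIn G π k) (v : V) :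
    G.edist v (π v) ≤ k := by
  obtain ⟨L, rfl, hL, rfl⟩ := h
  induction L generalizing v with
  | nil => simp
  | cons σ L ih =>
    have hσ := hL σ (List.mem_cons_self ..)
    calc G.edist v ((σ :: L).reverse.prod v)
        ≤ G.edist v (σ v) + G.edist (σ v) (L.reverse.prod (σ v)) := by
          simpa using G.edist_triangle
      _ ≤ 1 + L.length := add_le_add (hσ.edist_apply_le_one v)
          (ih (σ v) fun τ hτ => hL τ (List.mem_cons_of_mem σ hτ))
      _ = (σ :: L).length := by simp [add_comm]

theorem routingTime_eq_of_le_edist {π : Equiv.Perm V} {k : ℕ} (hk : RoutableIn G π k) (v : V)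
    (hv : k ≤ G.edist v (π v)) : routingTime G π = k := by
  refine le_antisymm (Nat.sInf_le hk) (le_csInf ⟨k, hk⟩ fun m hm => ?_)
  exact_mod_cast hv.trans (hm.edist_apply_le v)

end Routing

theorem cycleGraph_six_three_le_edist : 3 ≤ (cycleGraph 6).edist 0 3 := by
  refine Order.add_one_le_of_lt (two_lt_edist_iff.mpr ⟨by decide, by decide, ?_⟩)
  ext w
  simp only [mem_commonNeighbors, Set.mem_empty_iff_false, iff_false]
  revert w
  decide

theorem cycleGraph_six_geodesic {x y : Fin 6} (hx : (cycleGraph 6).edist 0 x ≤ 1)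
    (hxy : (cycleGraph 6).edist x y ≤ 1) (hy : (cycleGraph 6).edist y 3 ≤ 1) :
    x = 1 ∧ y = 2 ∨ x = 5 ∧ y = 4 := by
  rw [edist_le_one_iff_adj_or_eq] at hx hxy hy
  revert x y
  decide

theorem cycleGraph_six_routableIn_swap_zero_three :
    RoutableIn (cycleGraph 6) (Equiv.swap 0 3) 3 := by
  refine ⟨[Equiv.swap 0 1 * Equiv.swap 2 3, Equiv.swap 1 2, Equiv.swap 0 1 * Equiv.swap 2 3],
    rfl, ?_, by decide⟩
  simp only [List.mem_cons, List.not_mem_nil, or_false]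
  rintro σ (rfl | rfl | rfl) <;> exact ⟨by decide, by decide⟩

theorem cycleGraph_six_swap_zero_three_route_sides {σ₁ σ₂ σ₃ : Equiv.Perm (Fin 6)}
    (h₁ : IsMatchingStep (cycleGraph 6) σ₁) (h₂ : IsMatchingStep (cycleGraph 6) σ₂)
    (h₃ : IsMatchingStep (cycleGraph 6) σ₃) (hπ : σ₃ * σ₂ * σ₁ = Equiv.swap 0 3) :
    σ₁ 0 = 1 ∧ σ₂ (σ₁ 0) = 2 ∧ σ₁ 3 = 2 ∧ σ₂ (σ₁ 3) = 1 ∨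
      σ₁ 0 = 5 ∧ σ₂ (σ₁ 0) = 4 ∧ σ₁ 3 = 4 ∧ σ₂ (σ₁ 3) = 5 := by
  have hπ' (v : Fin 6) : σ₃ (σ₂ (σ₁ v)) = Equiv.swap 0 3 v := by rw [← hπ]; rfl
  have hlast (v : Fin 6) : (cycleGraph 6).edist (σ₂ (σ₁ v)) (Equiv.swap 0 3 v) ≤ 1 :=
    hπ' v ▸ h₃.edist_apply_le_one _
  have hA := cycleGraph_six_geodesic (h₁.edist_apply_le_one 0) (h₂.edist_apply_le_one _)
    (by simpa using hlast 0)
  have hB := cycleGraph_six_geodesic (x := σ₂ (σ₁ 3)) (y := σ₁ 3)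
    (by simpa [edist_comm] using hlast 3) (by rw [edist_comm]; exact h₂.edist_apply_le_one _)
    (by rw [edist_comm]; exact h₁.edist_apply_le_one 3)
  have hcross {p q : Fin 6} (hpq : p = 1 ∧ q = 5 ∨ p = 5 ∧ q = 1) (h₁p : σ₁ 0 = p)
      (h₂p : σ₂ p ≠ 0) (h₂q : σ₂ q ≠ 0) (h₃q : σ₃ q = 0) : False := by
    have hN : ∀ w, (cycleGraph 6).Adj 0 w → w = p ∨ w = q := by
      rcases hpq with ⟨rfl, rfl⟩ | ⟨rfl, rfl⟩ <;> decide
    have := IsMatchingStep.apply_apply_apply_eq_of_neighbors_busy h₁ h₂ h₃ hN h₁p h₂p h₂q h₃q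
    rw [hπ'] at this
    rcases hpq with ⟨rfl, rfl⟩ | ⟨rfl, rfl⟩ <;> exact absurd this (by decide)
  rcases hA with ⟨hA₁, hA₂⟩ | ⟨hA₁, hA₂⟩ <;> rcases hB with ⟨hB₂, hB₁⟩ | ⟨hB₂, hB₁⟩
  · exact Or.inl ⟨hA₁, hA₂, hB₁, hB₂⟩
  · refine (hcross (.inl ⟨rfl, rfl⟩) hA₁ ?_ ?_ (hB₂ ▸ hπ' 3)).elim
    · rw [← hA₁, hA₂]; decide
    · rw [h₂.apply_eq_comm.mp (hB₁ ▸ hB₂)]; decide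
  · refine (hcross (.inr ⟨rfl, rfl⟩) hA₁ ?_ ?_ (hB₂ ▸ hπ' 3)).elim
    · rw [← hA₁, hA₂]; decide
    · rw [h₂.apply_eq_comm.mp (hB₁ ▸ hB₂)]; decide
  · exact Or.inr ⟨hA₁, hA₂, hB₁, hB₂⟩

/-- On the hexagon `C_6` with antipodal vertices `0` and `3`, swapping the pebbles at
`0` and `3` takes exactly 3 matching steps; moreover, in any 3-step routing, the
intermediate positions of both pebbles all lie on the left `0–3` path `{0,1,2,3}`
or all lie on the right `0–3` path `{0,5,4,3}`. -/
theorem routingTime_hexagon_swap_antipodal :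
    routingTime (SimpleGraph.cycleGraph 6) (Equiv.swap (0 : Fin 6) 3) = 3 ∧
    ∀ σ1 σ2 σ3 : Equiv.Perm (Fin 6),
      IsMatchingStep (SimpleGraph.cycleGraph 6) σ1 →
      IsMatchingStep (SimpleGraph.cycleGraph 6) σ2 →
      IsMatchingStep (SimpleGraph.cycleGraph 6) σ3 →
      σ3 * σ2 * σ1 = Equiv.swap (0 : Fin 6) 3 →
      (({σ1 0, σ2 (σ1 0), σ1 3, σ2 (σ1 3)} : Set (Fin 6)) ⊆ {0, 1, 2, 3} ∨
       ({σ1 0, σ2 (σ1 0), σ1 3, σ2 (σ1 3)} : Set (Fin 6)) ⊆ {0, 5, 4, 3}) := by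
  refine ⟨routingTime_eq_of_le_edist cycleGraph_six_routableIn_swap_zero_three 0
    (by simpa using cycleGraph_six_three_le_edist), ?_⟩
  intro σ₁ σ₂ σ₃ h₁ h₂ h₃ hπ
  rcases cycleGraph_six_swap_zero_three_route_sides h₁ h₂ h₃ hπ with
    ⟨hA₁, hA₂, hB₁, hB₂⟩ | ⟨hA₁, hA₂, hB₁, hB₂⟩
  · left
    rw [hA₂, hB₂, hA₁, hB₁]
    simp [Set.insert_subset_iff]
  · right
    rw [hA₂, hB₂, hA₁, hB₁]
    simp [Set.insert_subset_iff]
end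

section
/- The routing number of the star K_{1,n-1} is ⌊3(n−1)/2⌋. -/
/-- The star graph with center `0` and `n` leaves. -/
def starGraph (n : ℕ) : SimpleGraph (Fin (n + 1)) :=
  SimpleGraph.fromRel (fun a _ => a = 0)

/-!
Routing `π` in `k` steps on the star means writing `π` as a product of `k` factors, each
the identity or a transposition `swap 0 i` of the center with a leaf.

Lower bound: the potential `#movedLeaves π + #leafTranspositions π` vanishes at `1` and
changes by at most one under left multiplication by `swap 0 i`, since only the status of
`i` and of the 2-cycle through `i` can change. The involution `(1 2)(3 4)⋯`, which for odd
`n` also swaps the last leaf with the center, has potential `⌊3n/2⌋`.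

Upper bound, by induction on the number `m` of moved leaves: if the center is moved, one
transposition with `π⁻¹ 0` fixes a leaf; if the center is fixed, two transpositions fix
a moved leaf `j` and make the center moved. Accounting for whether the center is fixed gives
at most `⌊3m/2⌋ ≤ ⌊3n/2⌋` steps.
-/

open Equiv Finset

section Routing
variable {V : Type*} {G : SimpleGraph V} {π σ : Perm V} {k : ℕ}

lemma isMatchingStep_one : IsMatchingStep G 1 :=
  ⟨fun _ => rfl, fun _ h => absurd rfl h⟩

namespace RoutableIn

lemma one (k : ℕ) : RoutableIn G 1 k :=
  ⟨List.replicate k 1, List.length_replicate,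
    fun _ hσ => List.eq_of_mem_replicate hσ ▸ isMatchingStep_one, by simp⟩

lemma of_mul_left (h : RoutableIn G (σ * π) k) (hσ : IsMatchingStep G σ) :
    RoutableIn G π (k + 1) := by
  obtain ⟨L, hlen, hsteps, hprod⟩ := h
  refine ⟨L ++ [σ], by simp [hlen], ?_, ?_⟩
  · simpa [or_imp, forall_and] using ⟨hsteps, hσ⟩
  · ext v
    simp [hprod, hσ.1]

lemma le_of_potential (φ : Perm V → ℕ) (h1 : φ 1 = 0)
    (hstep : ∀ σ π, IsMatchingStep G σ → φ (σ * π) ≤ φ π + 1) (h : RoutableIn G π k) :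
    φ π ≤ k := by
  obtain ⟨L, rfl, hsteps, rfl⟩ := h
  rw [← L.length_reverse]
  replace hsteps : ∀ σ ∈ L.reverse, IsMatchingStep G σ :=
    fun σ hσ => hsteps σ (List.mem_reverse.1 hσ)
  generalize L.reverse = M at hsteps ⊢
  induction M with
  | nil => simp [h1]
  | cons σ T ih =>
    have hσT := hstep σ T.prod (hsteps σ List.mem_cons_self)
    have hT := ih fun τ hτ => hsteps τ (List.mem_cons_of_mem _ hτ)
    simp only [List.prod_cons, List.length_cons]
    omega

end RoutableIn

lemma routingNumber_eq_of_routableIn {b : ℕ} (hub : ∀ π, RoutableIn G π b) (π₀ : Perm V)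
    (hlb : ∀ k, RoutableIn G π₀ k → b ≤ k) : routingNumber G = b := by
  refine IsGreatest.csSup_eq ⟨⟨π₀, ?_⟩, ?_⟩
  · exact le_antisymm (Nat.sInf_le (hub π₀)) (le_csInf ⟨b, hub π₀⟩ hlb)
  · rintro _ ⟨π, rfl⟩
    exact Nat.sInf_le (hub π)

end Routing

namespace StarGraph

variable {n : ℕ} {π σ : Perm (Fin (n + 1))} {i j l : Fin (n + 1)} {k : ℕ}

lemma adj_iff {a b : Fin (n + 1)} : (starGraph n).Adj a b ↔ a ≠ b ∧ (a = 0 ∨ b = 0) := by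
  simp [starGraph, SimpleGraph.fromRel_adj]

lemma isMatchingStep_swap (i : Fin (n + 1)) : IsMatchingStep (starGraph n) (swap 0 i) := by
  refine ⟨swap_apply_self 0 i, fun v hv => adj_iff.2 ⟨hv.symm, ?_⟩⟩
  rw [swap_apply_def] at hv ⊢
  grind

lemma eq_one_or_eq_swap (h : IsMatchingStep (starGraph n) σ) :
    σ = 1 ∨ ∃ i, σ = swap 0 i := by
  have hfix : ∀ v, σ v ≠ v → v = 0 ∨ σ v = 0 := fun v hv => (adj_iff.1 (h.2 v hv)).2
  by_cases h0 : σ 0 = 0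
  · refine Or.inl (Equiv.ext fun v => ?_)
    rw [Perm.one_apply]
    have := hfix v
    grind [Equiv.apply_eq_iff_eq]
  · refine Or.inr ⟨σ 0, Equiv.ext fun v => ?_⟩
    rw [swap_apply_def]
    have := h.1 0
    have := hfix v
    grind [Equiv.apply_eq_iff_eq]

def movedLeaves (π : Perm (Fin (n + 1))) : Finset (Fin (n + 1)) :=
  {v | v ≠ 0 ∧ π v ≠ v}

def leafTranspositions (π : Perm (Fin (n + 1))) : Finset (Fin (n + 1)) :=
  {v | v ≠ 0 ∧ π v ≠ 0 ∧ π (π v) = v ∧ v < π v}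

def potential (π : Perm (Fin (n + 1))) : ℕ := #(movedLeaves π) + #(leafTranspositions π)

@[simp] lemma mem_movedLeaves {v : Fin (n + 1)} : v ∈ movedLeaves π ↔ v ≠ 0 ∧ π v ≠ v := by
  simp [movedLeaves]

@[simp] lemma mem_leafTranspositions {v : Fin (n + 1)} :
    v ∈ leafTranspositions π ↔ v ≠ 0 ∧ π v ≠ 0 ∧ π (π v) = v ∧ v < π v := by
  simp [leafTranspositions]

lemma card_movedLeaves_le (π : Perm (Fin (n + 1))) : #(movedLeaves π) ≤ n := by
  simpa using card_le_card (show movedLeaves π ⊆ univ.erase 0 by intro v; simp_all)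

lemma movedLeaves_subset_insert_swap_mul :
    movedLeaves π ⊆ insert i (movedLeaves (swap 0 i * π)) := by
  intro v
  simp only [mem_insert, mem_movedLeaves, Perm.mul_apply, swap_apply_def]
  grind

lemma movedLeaves_subset_swap_mul (h : π i ≠ 0) :
    movedLeaves π ⊆ movedLeaves (swap 0 i * π) := by
  intro v
  simp only [mem_movedLeaves, Perm.mul_apply, swap_apply_def]
  grind [Equiv.apply_eq_iff_eq]

lemma leafTranspositions_subset_swap_mul (h : π i = 0) :
    leafTranspositions π ⊆ leafTranspositions (swap 0 i * π) := by
  intro v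
  simp only [mem_leafTranspositions, Perm.mul_apply, swap_apply_def]
  grind [Equiv.apply_eq_iff_eq]

lemma leafTranspositions_subset_insert_swap_mul :
    leafTranspositions π ⊆ insert (min i (π i)) (leafTranspositions (swap 0 i * π)) := by
  intro v
  simp only [mem_insert, mem_leafTranspositions, Perm.mul_apply, swap_apply_def]
  grind [Equiv.apply_eq_iff_eq]

lemma potential_le_swap_mul_add_one (π : Perm (Fin (n + 1))) (i : Fin (n + 1)) :
    potential π ≤ potential (swap 0 i * π) + 1 := by
  unfold potential
  by_cases h : π i = 0
  · have hA := card_le_card (movedLeaves_subset_insert_swap_mul (π := π) (i := i))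
    have hB := card_le_card (leafTranspositions_subset_swap_mul h)
    have := card_insert_le i (movedLeaves (swap 0 i * π))
    omega
  · have hA := card_le_card (movedLeaves_subset_swap_mul h)
    have hB := card_le_card (leafTranspositions_subset_insert_swap_mul (π := π) (i := i))
    have := card_insert_le (min i (π i)) (leafTranspositions (swap 0 i * π))
    omega

lemma potential_mul_le (hσ : IsMatchingStep (starGraph n) σ) (π : Perm (Fin (n + 1))) :
    potential (σ * π) ≤ potential π + 1 := by
  obtain rfl | ⟨i, rfl⟩ := eq_one_or_eq_swap hσ
  · simp
  · simpa using potential_le_swap_mul_add_one (swap 0 i * π) i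

lemma potential_one : potential (1 : Perm (Fin (n + 1))) = 0 := by
  simp [potential, movedLeaves, leafTranspositions]

lemma potential_le_of_routableIn (h : RoutableIn (starGraph n) π k) : potential π ≤ k :=
  h.le_of_potential potential potential_one fun _ π hσ => potential_mul_le hσ π

def pairing (n : ℕ) (v : Fin (n + 1)) : Fin (n + 1) :=
  ⟨if v.val = 0 then (if n % 2 = 1 then n else 0)
    else if v.val % 2 = 1 then (if v.val = n then 0 else v.val + 1) else v.val - 1,
    by have := v.isLt; split_ifs <;> omega⟩

lemma pairing_involutive : Function.Involutive (pairing n) := by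
  intro v
  ext
  simp only [pairing]
  have := v.isLt
  split_ifs <;> (try contradiction) <;> omega

def worstPerm (n : ℕ) : Perm (Fin (n + 1)) := pairing_involutive.toPerm

lemma worstPerm_apply_ne {v : Fin (n + 1)} (hv : v ≠ 0) : worstPerm n v ≠ v := by
  rw [Ne, Fin.ext_iff, Fin.val_zero] at hv
  simp only [Ne, Fin.ext_iff, worstPerm, Function.Involutive.coe_toPerm, pairing]
  have := v.isLt
  split_ifs <;> omega

lemma movedLeaves_worstPerm : movedLeaves (worstPerm n) = univ.erase 0 := by
  ext v
  simpa using worstPerm_apply_ne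

lemma mem_leafTranspositions_worstPerm {v : Fin (n + 1)} (hodd : v.val % 2 = 1)
    (hv : v.val ≠ n) :
    v ∈ leafTranspositions (worstPerm n) := by
  have hinv : worstPerm n (worstPerm n v) = v := pairing_involutive v
  have hval : (worstPerm n v : ℕ) = v + 1 := by
    simp [worstPerm, pairing, hodd, hv, show (v : ℕ) ≠ 0 by omega]
  simp only [mem_leafTranspositions, hinv, Ne, Fin.ext_iff, Fin.lt_def, Fin.val_zero, hval,
    true_and]
  omega

lemma le_card_leafTranspositions_worstPerm : n / 2 ≤ #(leafTranspositions (worstPerm n)) := by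
  have hval {k : ℕ} (hk : k ∈ range (n / 2)) :
      (Fin.ofNat (n + 1) (2 * k + 1) : ℕ) = 2 * k + 1 := by
    rw [mem_range] at hk
    rw [Fin.val_ofNat, Nat.mod_eq_of_lt (by omega)]
  calc n / 2 = #(range (n / 2)) := (card_range _).symm
    _ ≤ _ := card_le_card_of_injOn (fun k => Fin.ofNat (n + 1) (2 * k + 1))
      (fun k hk => mem_leafTranspositions_worstPerm (by rw [hval hk]; omega)
        (by have := mem_range.1 hk; rw [hval hk]; omega))
      (fun a ha b hb hab => by
        have := congrArg Fin.val hab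
        simp only [hval ha, hval hb] at this
        omega)

lemma three_mul_div_two_le_potential_worstPerm : 3 * n / 2 ≤ potential (worstPerm n) := by
  have := le_card_leafTranspositions_worstPerm (n := n)
  rw [potential, movedLeaves_worstPerm, card_erase_of_mem (mem_univ _), card_univ,
    Fintype.card_fin]
  omega

lemma eq_one_of_movedLeaves_eq_empty (h : movedLeaves π = ∅) : π = 1 := by
  have hfix : ∀ v, v ≠ 0 → π v = v := fun v hv => by
    by_contra hπv
    exact notMem_empty v (h ▸ mem_movedLeaves.2 ⟨hv, hπv⟩)
  refine Equiv.ext fun v => ?_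
  have := hfix (π 0)
  have := hfix v
  grind [Equiv.apply_eq_iff_eq, Perm.one_apply]

lemma apply_zero_mem_movedLeaves (h : π 0 ≠ 0) : π 0 ∈ movedLeaves π := by
  simp [h]

lemma movedLeaves_swap_mul_of_apply_eq_zero (hj : π j = 0) :
    movedLeaves (swap 0 j * π) = (movedLeaves π).erase j := by
  ext v
  simp only [mem_erase, mem_movedLeaves, Perm.mul_apply, swap_apply_def]
  grind [Equiv.apply_eq_iff_eq]

lemma movedLeaves_swap_mul_of_apply_zero_eq_zero (h0 : π 0 = 0) (hl : l ≠ 0) :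
    movedLeaves (swap 0 l * π) = insert l (movedLeaves π) := by
  ext v
  simp only [mem_insert, mem_movedLeaves, Perm.mul_apply, swap_apply_def]
  grind [Equiv.apply_eq_iff_eq]

def greedyBound (π : Perm (Fin (n + 1))) : ℕ :=
  if π 0 = 0 then 3 * #(movedLeaves π) / 2 else 3 * (#(movedLeaves π) - 1) / 2 + 1

lemma exists_greedyBound_swap_mul_of_apply_zero_ne_zero (h0 : π 0 ≠ 0) :
    ∃ j, #(movedLeaves (swap 0 j * π)) < #(movedLeaves π) ∧
      greedyBound (swap 0 j * π) + 1 ≤ greedyBound π := by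
  set j := π.symm 0
  have hj : π j = 0 := π.apply_symm_apply 0
  have hjA : j ∈ movedLeaves π := by grind [mem_movedLeaves]
  have hA : #(movedLeaves (swap 0 j * π)) = #(movedLeaves π) - 1 := by
    rw [movedLeaves_swap_mul_of_apply_eq_zero hj, card_erase_of_mem hjA]
  have hpos := card_pos.2 ⟨j, hjA⟩
  refine ⟨j, by omega, ?_⟩
  rw [greedyBound, greedyBound, hA, if_neg h0]
  split_ifs with h0'
  · omega
  · have := card_pos.2 ⟨_, apply_zero_mem_movedLeaves h0'⟩
    omega

lemma exists_greedyBound_swap_mul_swap_mul_of_apply_zero_eq_zero (h0 : π 0 = 0) (hπ : π ≠ 1) :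
    ∃ j l, #(movedLeaves (swap 0 j * (swap 0 l * π))) < #(movedLeaves π) ∧
      greedyBound (swap 0 j * (swap 0 l * π)) + 2 ≤ greedyBound π := by
  obtain ⟨j, hj⟩ := nonempty_iff_ne_empty.2 (mt eq_one_of_movedLeaves_eq_empty hπ)
  obtain ⟨hj0, hjl⟩ := mem_movedLeaves.1 hj
  set l := π j
  have hl0 : l ≠ 0 := fun h => hj0 (π.injective (h.trans h0.symm))
  have hl : l ∈ movedLeaves π := by grind [mem_movedLeaves, Equiv.apply_eq_iff_eq]
  have hτj : (swap 0 l * π) j = 0 := by simp [l]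
  have hA : #(movedLeaves (swap 0 j * (swap 0 l * π))) = #(movedLeaves π) - 1 := by
    rw [movedLeaves_swap_mul_of_apply_eq_zero hτj,
      movedLeaves_swap_mul_of_apply_zero_eq_zero h0 hl0, insert_eq_of_mem hl,
      card_erase_of_mem hj]
  have h0' : (swap 0 j * (swap 0 l * π)) 0 = l := by
    simp [h0, swap_apply_of_ne_of_ne hl0 hjl]
  have hpos := card_pos.2 ⟨_, apply_zero_mem_movedLeaves (h0' ▸ hl0)⟩
  refine ⟨j, l, by omega, ?_⟩
  rw [greedyBound, greedyBound, h0', if_neg hl0, if_pos h0, hA]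
  omega

lemma routableIn_of_greedyBound_le (h : greedyBound π ≤ k) : RoutableIn (starGraph n) π k := by
  induction hm : #(movedLeaves π) using Nat.strong_induction_on generalizing π k with
  | _ m ih =>
  subst hm
  by_cases h1 : π = 1
  · exact h1 ▸ RoutableIn.one k
  by_cases h0 : π 0 = 0
  · obtain ⟨j, l, hlt, hle⟩ := exists_greedyBound_swap_mul_swap_mul_of_apply_zero_eq_zero h0 h1
    obtain ⟨k, rfl⟩ : ∃ k', k = k' + 1 + 1 := ⟨k - 2, by omega⟩
    exact ((ih _ hlt (by omega) rfl).of_mul_left (isMatchingStep_swap j)).of_mul_left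
      (isMatchingStep_swap l)
  · obtain ⟨j, hlt, hle⟩ := exists_greedyBound_swap_mul_of_apply_zero_ne_zero h0
    obtain ⟨k, rfl⟩ : ∃ k', k = k' + 1 := ⟨k - 1, by omega⟩
    exact (ih _ hlt (by omega) rfl).of_mul_left (isMatchingStep_swap j)

lemma greedyBound_le (π : Perm (Fin (n + 1))) : greedyBound π ≤ 3 * n / 2 := by
  have := card_movedLeaves_le π
  unfold greedyBound
  split_ifs with h0
  · omega
  · have := card_pos.2 ⟨_, apply_zero_mem_movedLeaves h0⟩
    omega

end StarGraph

/-- The routing number of the star `K_{1,n}` is `⌊3 n / 2⌋`. -/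
theorem routingNumber_star (n : ℕ) : routingNumber (starGraph n) = 3 * n / 2 :=
  routingNumber_eq_of_routableIn
    (fun π => StarGraph.routableIn_of_greedyBound_le (StarGraph.greedyBound_le π))
    (StarGraph.worstPerm n)
    fun _ h => StarGraph.three_mul_div_two_le_potential_worstPerm.trans
      (StarGraph.potential_le_of_routableIn h)
end

section
/- For connected graphs G1 and G2, the sorting number of their Cartesian product satisfies st(G1 × G2) ≤ st(G1)·st(G2) + st(G1) + st(G2). -/
/-- A stage of a sorting network on vertex set `V`: `partner` is an involution whose
non-fixed pairs form the matched edges; a matched edge either always swaps the two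
pebbles (`swapAlways`) or is a directed comparator, directed towards the endpoint
marked by `lo`, which receives the smaller pebble. -/
structure SortStep (V : Type*) where
  partner : V → V
  swapAlways : V → Bool
  lo : V → Bool

/-- Well-formedness of a stage with respect to the graph `G`: `partner` is an
involutive matching of `G`, the `swapAlways` flag is consistent on a matched edge, and
every directed comparator has exactly one endpoint marked as lower. -/
def SortStep.WF {V : Type*} (G : SimpleGraph V) (s : SortStep V) : Prop :=
  (∀ v, s.partner (s.partner v) = v) ∧
  (∀ v, s.partner v ≠ v → G.Adj v (s.partner v)) ∧
  (∀ v, s.partner v ≠ v → s.swapAlways v = s.swapAlways (s.partner v)) ∧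
  (∀ v, s.partner v ≠ v → s.swapAlways v = false → s.lo v = !s.lo (s.partner v))

/-- Apply one stage to an arrangement `x` of values on the vertices. -/
def SortStep.apply {V : Type*} [DecidableEq V] {α : Type*} [LinearOrder α]
    (s : SortStep V) (x : V → α) : V → α := fun v =>
  if s.partner v = v then x v
  else if s.swapAlways v then x (s.partner v)
  else if s.lo v then min (x v) (x (s.partner v))
  else max (x v) (x (s.partner v))

/-- Apply a sequence of stages to an initial arrangement. -/
def applyNetwork {V : Type*} [DecidableEq V] {α : Type*} [LinearOrder α]
    (M : List (SortStep V)) (x : V → α) : V → α :=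
  M.foldl (fun y s => s.apply y) x

/-- `M` is a sorting network on `G` with sorted ordering given by the injective
ranking `rk`: for every initial arrangement, the final arrangement is sorted
according to `rk`. -/
def IsSortingNetwork {V : Type*} [DecidableEq V] (G : SimpleGraph V)
    (M : List (SortStep V)) (rk : V → ℕ) : Prop :=
  Function.Injective rk ∧ (∀ s ∈ M, s.WF G) ∧
    ∀ x : V → ℕ, ∀ u v, rk u ≤ rk v → applyNetwork M x u ≤ applyNetwork M x v

/-- `st(G, π)`: the minimum depth of a sorting network on `G` with the fixed
sorted ordering `rk`. -/
noncomputable def sortingNumberOrd {V : Type*} [DecidableEq V] (G : SimpleGraph V)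
    (rk : V → ℕ) : ℕ :=
  sInf {k | ∃ M : List (SortStep V), M.length = k ∧ IsSortingNetwork G M rk}

/-- The sorting number `st(G)`: the minimum depth of a sorting network on `G`,
over all sorted orderings. -/
noncomputable def sortingNumber {V : Type*} [DecidableEq V] (G : SimpleGraph V) : ℕ :=
  sInf {k | ∃ (M : List (SortStep V)) (rk : V → ℕ), M.length = k ∧ IsSortingNetwork G M rk}

/-!
Let `M₁`, `M₂` be optimal sorting networks on `G₁`, `G₂`, and `C = |V₂|`. For every stage `s`
of `M₁`, the product network runs `M₂` in every row, descending in the rows that are the upper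
end of a comparator of `s` and ascending in the others, and then applies `s` to all columns at
once; a last ascending run of `M₂` in every row follows. By the 0-1 principle only 0-1 inputs
matter. After a row phase a row is determined by its number of ones, and a column comparator
between an ascending lower row with `a` ones and a descending upper row with `b` ones leaves
`a + b - C` ones in the lower and `min C (a + b)` in the upper row. Running these counts
through `M₁` leaves the rows empty, then at most one partial row, then full rows, in the order
of `M₁`: a row with `z` ones can show a 0 (if `z < C`) or a 1 (if `0 < z`), and such choices
can be pulled back stage by stage to a 0-1 input of `M₁`, which `M₁` sorts.

Sorting networks exist on connected graphs (so the infimum defining `st` is attained): carry the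
minimum along a walk through all vertices to a vertex whose removal leaves the graph connected,
and sort the rest by induction.
-/

namespace SortStep

variable {V : Type*} {G : SimpleGraph V} {s : SortStep V}

def flip (s : SortStep V) : SortStep V := ⟨s.partner, s.swapAlways, fun v => !s.lo v⟩

lemma WF.flip (hs : s.WF G) : s.flip.WF G := by
  obtain ⟨h1, h2, h3, h4⟩ := hs
  exact ⟨h1, h2, h3, fun v hv hsw => by simp [SortStep.flip, h4 v hv hsw]⟩

lemma WF.partner_partner (hs : s.WF G) (v : V) : s.partner (s.partner v) = v := hs.1 v

lemma WF.partner_ne (hs : s.WF G) {v : V} (hv : s.partner v ≠ v) :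
    s.partner (s.partner v) ≠ s.partner v := by
  rw [hs.partner_partner]; exact hv.symm

lemma WF.swapAlways_partner (hs : s.WF G) {v : V} (hv : s.partner v ≠ v) :
    s.swapAlways (s.partner v) = s.swapAlways v := (hs.2.2.1 v hv).symm

lemma WF.lo_partner (hs : s.WF G) {v : V} (hv : s.partner v ≠ v)
    (hsw : s.swapAlways v = false) : s.lo (s.partner v) = !s.lo v := by
  simp [hs.2.2.2 v hv hsw]

variable [DecidableEq V]

def act {γ : Type*} (s : SortStep V) (lo hi : γ → γ → γ) (x : V → γ) : V → γ := fun v =>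
  if s.partner v = v then x v
  else if s.swapAlways v then x (s.partner v)
  else if s.lo v then lo (x v) (x (s.partner v))
  else hi (x v) (x (s.partner v))

section Act

variable {γ δ : Type*} {lo hi : γ → γ → γ} {x : V → γ} {v : V}

lemma apply_eq_act {α : Type*} [LinearOrder α] (s : SortStep V) (x : V → α) :
    s.apply x = s.act min max x := rfl

lemma act_of_partner_eq (h : s.partner v = v) : s.act lo hi x v = x v := by
  simp [act, h]

lemma act_of_swapAlways (h : s.partner v ≠ v) (hsw : s.swapAlways v = true) :
    s.act lo hi x v = x (s.partner v) := by
  simp [act, h, hsw]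

lemma act_of_lo (h : s.partner v ≠ v) (hsw : s.swapAlways v = false) (hl : s.lo v = true) :
    s.act lo hi x v = lo (x v) (x (s.partner v)) := by
  simp [act, h, hsw, hl]

lemma act_of_not_lo (h : s.partner v ≠ v) (hsw : s.swapAlways v = false)
    (hl : s.lo v = false) : s.act lo hi x v = hi (x v) (x (s.partner v)) := by
  simp [act, h, hsw, hl]

lemma act_map (s : SortStep V) {lo' hi' : δ → δ → δ} (f : γ → δ)
    (hlo : s.partner v ≠ v → s.swapAlways v = false → s.lo v = true →
      f (lo (x v) (x (s.partner v))) = lo' (f (x v)) (f (x (s.partner v))))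
    (hhi : s.partner v ≠ v → s.swapAlways v = false → s.lo v = false →
      f (hi (x v) (x (s.partner v))) = hi' (f (x v)) (f (x (s.partner v)))) :
    f (s.act lo hi x v) = s.act lo' hi' (f ∘ x) v := by
  unfold act
  split_ifs <;> simp_all

end Act

variable {α β : Type*} [LinearOrder α] [LinearOrder β]

lemma apply_comp_monotone (s : SortStep V) {f : α → β} (hf : Monotone f) (x : V → α) :
    s.apply (f ∘ x) = f ∘ s.apply x := by
  funext v
  simp only [SortStep.apply, Function.comp]
  split_ifs <;> simp [hf.map_min, hf.map_max]

lemma apply_comp_antitone (s : SortStep V) {f : α → β} (hf : Antitone f) (x : V → α) :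
    s.flip.apply (f ∘ x) = f ∘ s.apply x := by
  funext v
  by_cases hl : s.lo v <;>
    simp only [SortStep.apply, SortStep.flip, Function.comp, hl] <;>
    split_ifs <;> simp_all [hf.map_min, hf.map_max]

lemma apply_mem_pair (s : SortStep V) (x : V → α) (v : V) :
    s.apply x v = x v ∨ s.apply x v = x (s.partner v) := by
  unfold SortStep.apply
  split_ifs
  exacts [Or.inl rfl, Or.inr rfl, min_choice _ _, max_choice _ _]

lemma WF.apply_partner_ne (hs : s.WF G) {x : V → α} {v : V} (h : s.apply x v ≠ x v) :
    s.apply x (s.partner v) ≠ x (s.partner v) := by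
  rw [apply_eq_act] at h ⊢
  have hv : s.partner v ≠ v := fun hv => h (act_of_partner_eq hv)
  have hp := hs.partner_ne hv
  have hswp := hs.swapAlways_partner hv
  cases hsw : s.swapAlways v
  · have hlp := hs.lo_partner hv hsw
    rw [hsw] at hswp
    cases hl : s.lo v <;> rw [hl] at hlp
    · rw [act_of_not_lo hv hsw hl] at h
      rw [act_of_lo hp hswp hlp, hs.partner_partner]
      simpa using h
    · rw [act_of_lo hv hsw hl] at h
      rw [act_of_not_lo hp hswp hlp, hs.partner_partner]
      simpa using h
  · rw [act_of_swapAlways hv hsw] at h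
    rw [act_of_swapAlways hp (hswp.trans hsw), hs.partner_partner]
    exact h.symm

lemma WF.exists_perm_apply_eq (hs : s.WF G) (x : V → α) :
    ∃ σ : Equiv.Perm V, s.apply x = x ∘ σ := by
  let σ : V → V := fun v => if s.apply x v = x v then v else s.partner v
  have hσ : Function.Involutive σ := by
    intro v
    by_cases h : s.apply x v = x v
    · simp [σ, h]
    · simp [σ, h, hs.apply_partner_ne h, hs.partner_partner v]
  refine ⟨hσ.toPerm, funext fun v => ?_⟩
  by_cases h : s.apply x v = x v
  · simp [σ, h]
  · simpa [σ, h] using (s.apply_mem_pair x v).resolve_left h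

end SortStep

section Networks

variable {V : Type*} [DecidableEq V] {α β : Type*} [LinearOrder α] [LinearOrder β]

@[simp]
lemma applyNetwork_nil (x : V → α) : applyNetwork [] x = x := rfl

@[simp]
lemma applyNetwork_cons (s : SortStep V) (M : List (SortStep V)) (x : V → α) :
    applyNetwork (s :: M) x = applyNetwork M (s.apply x) := rfl

lemma applyNetwork_append (M N : List (SortStep V)) (x : V → α) :
    applyNetwork (M ++ N) x = applyNetwork N (applyNetwork M x) := by
  simp [applyNetwork, List.foldl_append]

lemma applyNetwork_exists_perm {G : SimpleGraph V} {M : List (SortStep V)}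
    (hM : ∀ s ∈ M, s.WF G) (x : V → α) : ∃ σ : Equiv.Perm V, applyNetwork M x = x ∘ σ := by
  induction M generalizing x with
  | nil => exact ⟨1, rfl⟩
  | cons s M ih =>
    obtain ⟨σ, hσ⟩ := (hM s (by simp)).exists_perm_apply_eq x
    obtain ⟨τ, hτ⟩ := ih (fun t ht => hM t (by simp [ht])) (s.apply x)
    exact ⟨τ.trans σ, by rw [applyNetwork_cons, hτ, hσ]; rfl⟩

lemma applyNetwork_of_forall_partner_eq {M : List (SortStep V)} {v : V}
    (h : ∀ s ∈ M, s.partner v = v) (x : V → α) : applyNetwork M x v = x v := by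
  induction M generalizing x with
  | nil => rfl
  | cons s M ih =>
    rw [applyNetwork_cons, ih (fun t ht => h t (by simp [ht]))]
    exact SortStep.act_of_partner_eq (h s (by simp))

lemma applyNetwork_comp_monotone (M : List (SortStep V)) {f : α → β} (hf : Monotone f)
    (x : V → α) : applyNetwork M (f ∘ x) = f ∘ applyNetwork M x := by
  induction M generalizing x with
  | nil => rfl
  | cons s M ih => rw [applyNetwork_cons, s.apply_comp_monotone hf, ih]; rfl

lemma applyNetwork_comp_antitone (M : List (SortStep V)) {f : α → β} (hf : Antitone f)
    (x : V → α) : applyNetwork (M.map SortStep.flip) (f ∘ x) = f ∘ applyNetwork M x := by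
  induction M generalizing x with
  | nil => rfl
  | cons s M ih => rw [List.map_cons, applyNetwork_cons, s.apply_comp_antitone hf, ih]; rfl

theorem zero_one_principle (M : List (SortStep V)) (rk : V → ℕ)
    (h01 : ∀ x : V → ℕ, (∀ v, x v ≤ 1) → ∀ u v, rk u ≤ rk v →
      applyNetwork M x u ≤ applyNetwork M x v)
    (x : V → ℕ) (u v : V) (huv : rk u ≤ rk v) : applyNetwork M x u ≤ applyNetwork M x v := by
  by_contra! hlt
  let f : ℕ → ℕ := fun t => if applyNetwork M x u ≤ t then 1 else 0
  have hf : Monotone f := fun a b hab => by dsimp only [f]; split_ifs <;> omega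
  have := h01 (f ∘ x) (fun w => by dsimp only [f, Function.comp]; split_ifs <;> omega) u v huv
  simp only [applyNetwork_comp_monotone M hf, Function.comp, f] at this
  split_ifs at this <;> omega

end Networks

namespace SortStep

variable {V : Type*} [DecidableEq V] {α : Type*} [LinearOrder α]

def comparator (a b : V) : SortStep V where
  partner z := if z = a then b else if z = b then a else z
  swapAlways _ := false
  lo z := decide (z = a)

lemma comparator_wf {G : SimpleGraph V} {a b : V} (h : G.Adj a b) : (comparator a b).WF G := by
  have hab := h.ne
  refine ⟨fun z => ?_, fun z hz => ?_, fun _ _ => rfl, fun z hz _ => ?_⟩ <;>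
    by_cases hza : z = a <;> by_cases hzb : z = b <;>
    simp_all [comparator, eq_comm, G.adj_comm]

lemma comparator_partner_of_ne {a b z : V} (ha : z ≠ a) (hb : z ≠ b) :
    (comparator a b).partner z = z := by
  simp [comparator, ha, hb]

lemma comparator_apply_left {a b : V} (hab : a ≠ b) (x : V → α) :
    (comparator a b).apply x a = min (x a) (x b) := by
  simp [SortStep.apply, comparator, hab.symm]

lemma comparator_apply_right {a b : V} (hab : a ≠ b) (x : V → α) :
    (comparator a b).apply x b = max (x b) (x a) := by
  simp [SortStep.apply, comparator, hab, hab.symm]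

end SortStep

namespace SimpleGraph.Walk

variable {V : Type*} [DecidableEq V] {α : Type*} [LinearOrder α] {G : SimpleGraph V} {a b : V}

def bubbleNetwork (w : G.Walk a b) : List (SortStep V) :=
  w.darts.map fun d => SortStep.comparator d.snd d.fst

lemma bubbleNetwork_wf (w : G.Walk a b) : ∀ s ∈ w.bubbleNetwork, s.WF G := by
  simp only [bubbleNetwork, List.mem_map]
  rintro _ ⟨d, -, rfl⟩
  exact SortStep.comparator_wf d.adj.symm

lemma bubbleNetwork_partner_of_notMem {w : G.Walk a b} {z : V} (hz : z ∉ w.support) :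
    ∀ s ∈ w.bubbleNetwork, s.partner z = z := by
  simp only [bubbleNetwork, List.mem_map]
  rintro _ ⟨d, hd, rfl⟩
  exact SortStep.comparator_partner_of_ne
    (fun h => hz (h ▸ w.dart_snd_mem_support_of_mem_darts hd))
    (fun h => hz (h ▸ w.dart_fst_mem_support_of_mem_darts hd))

lemma applyNetwork_bubbleNetwork_le (w : G.Walk a b) (x : V → α) :
    applyNetwork w.bubbleNetwork x b ≤ x a ∧
      ∀ z ∈ w.support, applyNetwork w.bubbleNetwork x b ≤ applyNetwork w.bubbleNetwork x z := by
  induction w generalizing x with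
  | nil => simp [bubbleNetwork]
  | @cons a c b hac p ih =>
    set y := (SortStep.comparator c a).apply x
    have hrun : applyNetwork (cons hac p).bubbleNetwork x = applyNetwork p.bubbleNetwork y := by
      simp [bubbleNetwork, y]
    have hyc : y c = min (x c) (x a) := SortStep.comparator_apply_left hac.ne.symm x
    have hya : y a = max (x a) (x c) := SortStep.comparator_apply_right hac.ne.symm x
    obtain ⟨ih_start, ih_support⟩ := ih y
    rw [hrun]
    refine ⟨ih_start.trans (hyc ▸ min_le_right _ _), fun z hz => ?_⟩
    rw [support_cons, List.mem_cons] at hz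
    rcases hz with rfl | hz
    · by_cases hzp : z ∈ p.support
      · exact ih_support z hzp
      rw [applyNetwork_of_forall_partner_eq (bubbleNetwork_partner_of_notMem hzp), hya]
      exact ih_start.trans (hyc ▸ (min_le_left _ _).trans (le_max_right _ _))
    · exact ih_support z hz

end SimpleGraph.Walk

lemma SimpleGraph.Connected.exists_walk_forall_mem_support {V : Type*} [Finite V]
    {G : SimpleGraph V} (h : G.Connected) (a b : V) :
    ∃ w : G.Walk a b, ∀ z, z ∈ w.support := by
  have := Fintype.ofFinite V
  suffices ∀ (l : List V) (a : V), ∃ w : G.Walk a b, ∀ z ∈ l, z ∈ w.support by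
    simpa using this Finset.univ.toList a
  intro l
  induction l with
  | nil => exact fun a => ⟨(h a b).some, by simp⟩
  | cons z l ih =>
    intro a
    obtain ⟨w, hw⟩ := ih z
    refine ⟨(h a z).some.append w, fun y hy => ?_⟩
    rw [SimpleGraph.Walk.mem_support_append_iff]
    rcases List.mem_cons.1 hy with rfl | hy
    exacts [Or.inr w.start_mem_support, Or.inr (hw y hy)]

namespace SortStep

variable {V : Type*} {S : Set V} [DecidablePred (· ∈ S)]

def extend (t : SortStep S) : SortStep V where
  partner v := if h : v ∈ S then t.partner ⟨v, h⟩ else v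
  swapAlways v := if h : v ∈ S then t.swapAlways ⟨v, h⟩ else false
  lo v := if h : v ∈ S then t.lo ⟨v, h⟩ else false

lemma WF.extend {G : SimpleGraph V} {t : SortStep S} (ht : t.WF (G.induce S)) :
    t.extend.WF G := by
  obtain ⟨h1, h2, h3, h4⟩ := ht
  refine ⟨fun v => ?_, fun v hv => ?_, fun v hv => ?_, fun v hv => ?_⟩ <;>
    by_cases h : v ∈ S <;> simp_all [SortStep.extend, Subtype.ext_iff]

variable [DecidableEq V] {α : Type*} [LinearOrder α]

lemma extend_apply (t : SortStep S) (x : V → α) (v : V) :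
    t.extend.apply x v = if h : v ∈ S then t.apply (fun u : S => x u) ⟨v, h⟩ else x v := by
  by_cases h : v ∈ S <;> simp [SortStep.apply, SortStep.extend, h, Subtype.ext_iff]

end SortStep

section Existence

variable {V : Type*} [DecidableEq V] {G : SimpleGraph V}

lemma applyNetwork_map_extend {S : Set V} [DecidablePred (· ∈ S)] {α : Type*} [LinearOrder α]
    (M : List (SortStep S)) (x : V → α) (v : V) :
    applyNetwork (M.map SortStep.extend) x v =
      if h : v ∈ S then applyNetwork M (fun u : S => x u) ⟨v, h⟩ else x v := by
  induction M generalizing x with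
  | nil => by_cases h : v ∈ S <;> simp [h]
  | cons t M ih =>
    have hx : (fun u : S => t.extend.apply x u) = t.apply (fun u : S => x u) := by
      funext u; simp [SortStep.extend_apply]
    rw [List.map_cons, applyNetwork_cons, ih, hx, applyNetwork_cons]
    by_cases h : v ∈ S <;> simp [h, SortStep.extend_apply]

lemma isSortingNetwork_bubbleNetwork_append {a v₀ : V} {w : G.Walk a v₀}
    (hw : ∀ z, z ∈ w.support) {M : List (SortStep ({v₀}ᶜ : Set V))}
    {rk : ({v₀}ᶜ : Set V) → ℕ} (hM : IsSortingNetwork (G.induce {v₀}ᶜ) M rk) :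
    IsSortingNetwork G (w.bubbleNetwork ++ M.map SortStep.extend)
      (fun z => if h : z ∈ ({v₀}ᶜ : Set V) then rk ⟨z, h⟩ + 1 else 0) := by
  obtain ⟨hinj, hwf, hsort⟩ := hM
  refine ⟨fun u v huv => ?_, fun s hs => ?_, fun x u v huv => ?_⟩
  · by_cases hu : u ∈ ({v₀}ᶜ : Set V) <;> by_cases hv : v ∈ ({v₀}ᶜ : Set V) <;>
      simp only [hu, hv, dif_pos, dif_neg, not_false_eq_true] at huv
    · simpa using hinj (Nat.succ_injective huv)
    · omega
    · omega
    · simp_all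
  · rcases List.mem_append.1 hs with hs | hs
    · exact w.bubbleNetwork_wf s hs
    · obtain ⟨t, ht, rfl⟩ := List.mem_map.1 hs
      exact (hwf t ht).extend
  · set y := applyNetwork w.bubbleNetwork x
    have hmin : ∀ z, y v₀ ≤ y z := fun z => (w.applyNetwork_bubbleNetwork_le x).2 z (hw z)
    rw [applyNetwork_append, applyNetwork_map_extend, applyNetwork_map_extend]
    by_cases hu : u ∈ ({v₀}ᶜ : Set V) <;> by_cases hv : v ∈ ({v₀}ᶜ : Set V) <;>
      simp only [hu, hv, dif_pos, dif_neg, not_false_eq_true] at huv ⊢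
    · exact hsort _ _ _ (by omega)
    · omega
    · obtain ⟨σ, hσ⟩ := applyNetwork_exists_perm hwf (fun z : ({v₀}ᶜ : Set V) => y z)
      simp only [Set.mem_compl_singleton_iff, not_not] at hu
      rw [hσ, hu]
      exact hmin _
    · simp_all

theorem exists_isSortingNetwork [Finite V] (hG : G.Connected) :
    ∃ M rk, IsSortingNetwork G M rk := by
  refine Finite.induction_subsingleton_or_nontrivial
    (P := fun W => ∀ [DecidableEq W] (H : SimpleGraph W), H.Connected →
      ∃ M rk, IsSortingNetwork H M rk) V ?_ ?_ G hG
  · intro W _ _ _ H _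
    refine ⟨[], fun _ => 0, fun u v _ => Subsingleton.elim u v, by simp, fun x u v _ => ?_⟩
    rw [Subsingleton.elim u v]
  · intro W _ _ ih _ H hH
    obtain ⟨v₀, hv₀⟩ := hH.exists_connected_induce_compl_singleton_of_finite_nontrivial
    obtain ⟨M, rk, hM⟩ := ih ({v₀}ᶜ : Set W)
      (Finite.card_subtype_lt (p := (· ∈ ({v₀}ᶜ : Set W))) (x := v₀) (by simp)) _ hv₀
    obtain ⟨w, hw⟩ := hH.exists_walk_forall_mem_support v₀ v₀
    exact ⟨_, _, isSortingNetwork_bubbleNetwork_append hw hM⟩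

end Existence

section Patterns

open Finset

variable {W : Type*} [Fintype W] (rk : W → ℕ)

def rankPos (v : W) : ℕ := #{u | rk u < rk v}

def ascPattern (z : ℕ) (v : W) : ℕ := if Fintype.card W - z ≤ rankPos rk v then 1 else 0

def descPattern (z : ℕ) (v : W) : ℕ := if rankPos rk v < z then 1 else 0

variable {rk}

lemma card_rk_le_eq_card_sub_rankPos (v : W) : #{u | rk v ≤ rk u} = Fintype.card W - rankPos rk v := by
  have := card_filter_add_card_filter_not (s := univ) (fun u => rk u < rk v)
  simp only [not_lt, card_univ] at this
  rw [rankPos]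
  omega

lemma rankPos_lt_card (v : W) : rankPos rk v < Fintype.card W :=
  card_lt_univ_of_notMem (x := v) (by simp)

lemma rankPos_strictMono {u v : W} (h : rk u < rk v) : rankPos rk u < rankPos rk v := by
  refine card_lt_card ((ssubset_iff_of_subset fun w => ?_).2 ⟨u, by simpa using h, by simp⟩)
  simp only [mem_filter, mem_univ, true_and]
  omega

lemma rankPos_injective (hrk : Function.Injective rk) : Function.Injective (rankPos rk) := by
  intro u v h
  rcases lt_trichotomy (rk u) (rk v) with huv | huv | huv
  · exact absurd h (rankPos_strictMono huv).ne
  · exact hrk huv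
  · exact absurd h (rankPos_strictMono huv).ne'

lemma sum_le_card_of_le_one {y : W → ℕ} (hy : ∀ v, y v ≤ 1) : ∑ v, y v ≤ Fintype.card W :=
  (sum_le_sum fun v _ => hy v).trans (by simp)

lemma eq_ascPattern_of_monotone {y : W → ℕ} (hy : ∀ v, y v ≤ 1)
    (hmono : ∀ u v, rk u ≤ rk v → y u ≤ y v) : y = ascPattern rk (∑ u, y u) := by
  funext v
  have hup := card_rk_le_eq_card_sub_rankPos (rk := rk) v
  have hpos := rankPos_lt_card (rk := rk) v
  unfold ascPattern
  rcases Nat.le_one_iff_eq_zero_or_eq_one.1 (hy v) with hv | hv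
  · have hsum : ∑ u, y u = ∑ u with rk v < rk u, y u :=
      (sum_filter_of_ne fun u _ hu => by
        by_contra hle
        exact hu (by have := hmono u v (not_lt.1 hle); omega)).symm
    have hlt : #{u | rk v < rk u} < #{u | rk v ≤ rk u} := by
      refine card_lt_card ((ssubset_iff_of_subset fun w => ?_).2 ⟨v, by simp, by simp⟩)
      simp only [mem_filter, mem_univ, true_and]
      omega
    have : ∑ u with rk v < rk u, y u ≤ #{u | rk v < rk u} :=
      (sum_le_sum fun u _ => hy u).trans (by simp)
    rw [if_neg (by omega), hv]
  · have : #{u | rk v ≤ rk u} ≤ ∑ u, y u :=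
      calc #{u | rk v ≤ rk u} = ∑ u with rk v ≤ rk u, y u := by
            rw [card_eq_sum_ones]
            exact sum_congr rfl fun u hu =>
              le_antisymm (hv ▸ hmono v u (mem_filter.1 hu).2) (hy u)
        _ ≤ ∑ u, y u := sum_le_sum_of_subset (subset_univ _)
    rw [if_pos (by omega), hv]

lemma sum_range_ite_le_and_lt (C a b : ℕ) :
    ∑ k ∈ range C, (if a ≤ k ∧ k < b then 1 else 0) = min b C - a := by
  induction C with
  | zero => simp
  | succ C ih => rw [sum_range_succ, ih]; split_ifs <;> omega

variable (hrk : Function.Injective rk)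
include hrk

lemma sum_comp_rankPos (g : ℕ → ℕ) :
    ∑ v, g (rankPos rk v) = ∑ k ∈ range (Fintype.card W), g k := by
  have himage : univ.image (rankPos rk) = range (Fintype.card W) := by
    refine eq_of_subset_of_card_le (fun k hk => ?_) ?_
    · obtain ⟨v, -, rfl⟩ := mem_image.1 hk
      exact mem_range.2 (rankPos_lt_card v)
    · rw [card_range, card_image_of_injective _ (rankPos_injective hrk), card_univ]
  rw [← himage, sum_image fun u _ v _ h => rankPos_injective hrk h]

lemma sum_ite_le_rankPos_and_lt (a b : ℕ) :
    ∑ v, (if a ≤ rankPos rk v ∧ rankPos rk v < b then 1 else 0) =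
      min b (Fintype.card W) - a :=
  (sum_comp_rankPos hrk fun k => if a ≤ k ∧ k < b then 1 else 0).trans
    (sum_range_ite_le_and_lt _ a b)

variable {z z' : ℕ} (hz : z ≤ Fintype.card W) (hz' : z' ≤ Fintype.card W)
include hz

lemma sum_ascPattern : ∑ v, ascPattern rk z v = z := by
  have h : ∀ v, ascPattern rk z v =
      if Fintype.card W - z ≤ rankPos rk v ∧ rankPos rk v < Fintype.card W then 1 else 0 :=
    fun v => by simp [ascPattern, rankPos_lt_card v]
  rw [sum_congr rfl fun v _ => h v, sum_ite_le_rankPos_and_lt hrk]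
  omega

lemma sum_descPattern : ∑ v, descPattern rk z v = z := by
  have h : ∀ v, descPattern rk z v = if 0 ≤ rankPos rk v ∧ rankPos rk v < z then 1 else 0 :=
    fun v => by simp [descPattern]
  rw [sum_congr rfl fun v _ => h v, sum_ite_le_rankPos_and_lt hrk]
  omega

include hz'

lemma sum_min_ascPattern_descPattern :
    ∑ v, min (ascPattern rk z v) (descPattern rk z' v) = z + z' - Fintype.card W := by
  have h : ∀ v, min (ascPattern rk z v) (descPattern rk z' v) =
      if Fintype.card W - z ≤ rankPos rk v ∧ rankPos rk v < z' then 1 else 0 :=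
    fun v => by simp only [ascPattern, descPattern]; split_ifs <;> omega
  rw [sum_congr rfl fun v _ => h v, sum_ite_le_rankPos_and_lt hrk]
  omega

lemma sum_max_descPattern_ascPattern :
    ∑ v, max (descPattern rk z v) (ascPattern rk z' v) = min (Fintype.card W) (z + z') := by
  have h : ∀ v, min (ascPattern rk z' v) (descPattern rk z v) +
      max (descPattern rk z v) (ascPattern rk z' v) = descPattern rk z v + ascPattern rk z' v :=
    fun v => by simp only [ascPattern, descPattern]; split_ifs <;> omega
  have := sum_congr rfl fun v (_ : v ∈ univ) => h v
  rw [sum_add_distrib, sum_add_distrib, sum_min_ascPattern_descPattern hrk hz' hz,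
    sum_descPattern hrk hz, sum_ascPattern hrk hz'] at this
  omega

end Patterns

section RowSort

variable {W : Type*} [Fintype W] [DecidableEq W] {G : SimpleGraph W} {M : List (SortStep W)}
  {rk : W → ℕ} {y : W → ℕ}

lemma IsSortingNetwork.applyNetwork_eq_ascPattern (hM : IsSortingNetwork G M rk)
    (hy : ∀ v, y v ≤ 1) : applyNetwork M y = ascPattern rk (∑ v, y v) := by
  obtain ⟨σ, hσ⟩ := applyNetwork_exists_perm hM.2.1 y
  have h01 : ∀ v, applyNetwork M y v ≤ 1 := fun v => by rw [hσ]; exact hy _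
  calc applyNetwork M y = ascPattern rk (∑ v, applyNetwork M y v) :=
        eq_ascPattern_of_monotone h01 (hM.2.2 y)
    _ = ascPattern rk (∑ v, y v) := by rw [hσ, Function.comp_def, Equiv.sum_comp σ y]

lemma IsSortingNetwork.applyNetwork_flip_eq_descPattern (hM : IsSortingNetwork G M rk)
    (hy : ∀ v, y v ≤ 1) : applyNetwork (M.map SortStep.flip) y = descPattern rk (∑ v, y v) := by
  have hanti : Antitone fun t : ℕ => 1 - t := fun a b hab => Nat.sub_le_sub_left hab 1
  have hcompl : ∑ v, (1 - y v) + ∑ v, y v = Fintype.card W := by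
    rw [← Finset.sum_add_distrib, ← Finset.card_univ, Finset.card_eq_sum_ones]
    exact Finset.sum_congr rfl fun v _ => by have := hy v; omega
  have hy' : y = (fun t => 1 - t) ∘ fun v => 1 - y v := funext fun v => by
    simp only [Function.comp]; have := hy v; omega
  rw [hy', applyNetwork_comp_antitone M hanti, hM.applyNetwork_eq_ascPattern fun v => by omega,
    ← hy']
  funext v
  have := rankPos_lt_card (rk := rk) v
  simp only [Function.comp, ascPattern, descPattern]
  split_ifs <;> omega

end RowSort

section Pour

variable {V : Type*} [DecidableEq V] {G : SimpleGraph V} {C : ℕ}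

/-- How a column stage changes the numbers of ones of rows of length `C`, when every lower row
is sorted ascending and every upper row descending. -/
def pourStep (C : ℕ) (s : SortStep V) : (V → ℕ) → V → ℕ :=
  s.act (fun a b => a + b - C) (fun a b => min C (a + b))

def pourNetwork (C : ℕ) (M : List (SortStep V)) (Z : V → ℕ) : V → ℕ :=
  M.foldl (fun Z s => pourStep C s Z) Z

@[simp]
lemma pourNetwork_cons (C : ℕ) (s : SortStep V) (M : List (SortStep V)) (Z : V → ℕ) :
    pourNetwork C (s :: M) Z = pourNetwork C M (pourStep C s Z) := rfl

lemma pourStep_le (s : SortStep V) {Z : V → ℕ} (hZ : ∀ v, Z v ≤ C) (v : V) :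
    pourStep C s Z v ≤ C := by
  have := hZ v
  have := hZ (s.partner v)
  unfold pourStep SortStep.act
  beta_reduce
  split_ifs <;> omega

lemma pourNetwork_le (M : List (SortStep V)) {Z : V → ℕ} (hZ : ∀ v, Z v ≤ C) (v : V) :
    pourNetwork C M Z v ≤ C := by
  induction M generalizing Z with
  | nil => exact hZ v
  | cons s M ih => exact ih (pourStep_le s hZ)

/-- `RowAdmits C z b`: a 0-1 row of length `C` with `z` ones has an entry equal to `b`. -/
def RowAdmits (C z b : ℕ) : Prop := b ≤ 1 ∧ b ≤ z ∧ z < C + b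

def pourPreimage (C a b βl βh : ℕ) : ℕ × ℕ :=
  if βl = βh then (βl, βh) else if a < C ∧ 1 ≤ b then (0, 1) else (1, 0)

lemma pourPreimage_spec {a b βl βh : ℕ} (ha : a ≤ C) (hb : b ≤ C)
    (hl : RowAdmits C (a + b - C) βl) (hh : RowAdmits C (min C (a + b)) βh) :
    RowAdmits C a (pourPreimage C a b βl βh).1 ∧ RowAdmits C b (pourPreimage C a b βl βh).2 ∧
      min (pourPreimage C a b βl βh).1 (pourPreimage C a b βl βh).2 = βl ∧
      max (pourPreimage C a b βl βh).2 (pourPreimage C a b βl βh).1 = βh := by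
  unfold RowAdmits at *
  unfold pourPreimage
  split_ifs <;> omega

lemma SortStep.WF.exists_apply_eq_of_rowAdmits {s : SortStep V} (hs : s.WF G)
    {Z β : V → ℕ} (hZ : ∀ v, Z v ≤ C) (hβ : ∀ v, RowAdmits C (pourStep C s Z v) (β v)) :
    ∃ b : V → ℕ, (∀ v, RowAdmits C (Z v) (b v)) ∧ s.apply b = β := by
  let b : V → ℕ := fun v =>
    if s.partner v = v then β v
    else if s.swapAlways v then β (s.partner v)
    else if s.lo v then (pourPreimage C (Z v) (Z (s.partner v)) (β v) (β (s.partner v))).1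
    else (pourPreimage C (Z (s.partner v)) (Z v) (β (s.partner v)) (β v)).2
  suffices ∀ v, RowAdmits C (Z v) (b v) ∧ s.apply b v = β v from
    ⟨b, fun v => (this v).1, funext fun v => (this v).2⟩
  intro v
  have hβv := hβ v
  have hβp := hβ (s.partner v)
  rw [apply_eq_act]
  unfold pourStep at hβv hβp
  by_cases hv : s.partner v = v
  · rw [act_of_partner_eq hv] at hβv ⊢
    simp_all [b]
  have hp := hs.partner_ne hv
  have hpp := hs.partner_partner v
  have hswp := hs.swapAlways_partner hv
  cases hsw : s.swapAlways v
  · have hlp := hs.lo_partner hv hsw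
    rw [hsw] at hswp
    cases hl : s.lo v <;> rw [hl] at hlp
    · rw [act_of_not_lo hv hsw hl] at hβv ⊢
      rw [act_of_lo hp hswp hlp, hpp] at hβp
      have := pourPreimage_spec (hZ (s.partner v)) (hZ v) hβp (by rwa [add_comm])
      simp_all [b]
    · rw [act_of_lo hv hsw hl] at hβv ⊢
      rw [act_of_not_lo hp hswp hlp, hpp] at hβp
      have := pourPreimage_spec (hZ v) (hZ (s.partner v)) hβv (by rwa [add_comm])
      simp_all [b]
  · rw [act_of_swapAlways hv hsw]
    rw [act_of_swapAlways hp (hswp.trans hsw), hpp] at hβp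
    simp_all [b]

lemma exists_applyNetwork_eq_of_rowAdmits {M : List (SortStep V)} (hM : ∀ s ∈ M, s.WF G)
    {Z β : V → ℕ} (hZ : ∀ v, Z v ≤ C) (hβ : ∀ v, RowAdmits C (pourNetwork C M Z v) (β v)) :
    ∃ b : V → ℕ, (∀ v, RowAdmits C (Z v) (b v)) ∧ applyNetwork M b = β := by
  induction M generalizing Z with
  | nil => exact ⟨β, hβ, rfl⟩
  | cons s M ih =>
    obtain ⟨b', hb', hb'β⟩ := ih (fun t ht => hM t (by simp [ht])) (pourStep_le s hZ) hβ
    obtain ⟨b, hb, hbb'⟩ := (hM s (by simp)).exists_apply_eq_of_rowAdmits hZ hb'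
    exact ⟨b, hb, by rw [applyNetwork_cons, hbb', hb'β]⟩

theorem IsSortingNetwork.pourNetwork_eq_zero_or_eq {M : List (SortStep V)} {rk : V → ℕ}
    (hM : IsSortingNetwork G M rk) {Z : V → ℕ} (hZ : ∀ v, Z v ≤ C) {u w : V}
    (huw : rk u < rk w) : pourNetwork C M Z u = 0 ∨ pourNetwork C M Z w = C := by
  by_contra! ⟨hu, hw⟩
  set Z' := pourNetwork C M Z
  have hZ' : ∀ v, Z' v ≤ C := pourNetwork_le M hZ
  have hne : u ≠ w := fun h => huw.ne (congrArg rk h)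
  let β : V → ℕ := fun v => if v = u then 1 else if v = w then 0 else if 1 ≤ Z' v then 1 else 0
  have hβ : ∀ v, RowAdmits C (Z' v) (β v) := by
    intro v
    have := hZ' v
    have := hZ' u
    by_cases hvu : v = u
    · subst hvu; simp only [RowAdmits, β, if_pos]; omega
    by_cases hvw : v = w
    · subst hvw; simp only [RowAdmits, β, if_neg hvu, if_pos]; omega
    simp only [RowAdmits, β, if_neg hvu, if_neg hvw]
    split_ifs <;> omega
  obtain ⟨b, -, hb⟩ := exists_applyNetwork_eq_of_rowAdmits hM.2.1 hZ hβ
  have := hM.2.2 b u w huw.le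
  simp [hb, β, hne.symm] at this

end Pour

namespace SortStep

variable {V₁ V₂ : Type*} {G₁ : SimpleGraph V₁} {G₂ : SimpleGraph V₂}

def prodRows (t : V₁ → SortStep V₂) : SortStep (V₁ × V₂) where
  partner p := (p.1, (t p.1).partner p.2)
  swapAlways p := (t p.1).swapAlways p.2
  lo p := (t p.1).lo p.2

def prodCols (s : SortStep V₁) : SortStep (V₁ × V₂) where
  partner p := (s.partner p.1, p.2)
  swapAlways p := s.swapAlways p.1
  lo p := s.lo p.1

lemma WF.prodRows {t : V₁ → SortStep V₂} (ht : ∀ v, (t v).WF G₂) :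
    (prodRows t).WF (G₁.boxProd G₂) := by
  refine ⟨fun p => ?_, fun p hp => ?_, fun p hp => ?_, fun p hp => ?_⟩ <;>
    simp only [SortStep.prodRows, ne_eq, Prod.ext_iff, true_and] at *
  · exact (ht p.1).1 p.2
  · exact SimpleGraph.boxProd_adj.2 (Or.inr ⟨(ht p.1).2.1 p.2 hp, rfl⟩)
  · exact (ht p.1).2.2.1 p.2 hp
  · exact (ht p.1).2.2.2 p.2 hp

lemma WF.prodCols {s : SortStep V₁} (hs : s.WF G₁) :
    (prodCols s : SortStep (V₁ × V₂)).WF (G₁.boxProd G₂) := by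
  refine ⟨fun p => ?_, fun p hp => ?_, fun p hp => ?_, fun p hp => ?_⟩ <;>
    simp only [SortStep.prodCols, ne_eq, Prod.ext_iff, and_true] at *
  · exact hs.1 p.1
  · exact SimpleGraph.boxProd_adj.2 (Or.inl ⟨hs.2.1 p.1 hp, rfl⟩)
  · exact hs.2.2.1 p.1 hp
  · exact hs.2.2.2 p.1 hp

variable [DecidableEq V₁]

def isUpper (s : SortStep V₁) (v : V₁) : Bool :=
  decide (s.partner v ≠ v) && !s.swapAlways v && !s.lo v

lemma WF.isUpper_of_partner_ne {s : SortStep V₁} (hs : s.WF G₁) {v : V₁}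
    (hv : s.partner v ≠ v) (hsw : s.swapAlways v = false) :
    s.isUpper v = !s.lo v ∧ s.isUpper (s.partner v) = s.lo v := by
  simp [isUpper, hv, hsw, hs.partner_ne hv, (hs.swapAlways_partner hv).trans hsw,
    hs.lo_partner hv hsw]

variable [DecidableEq V₂] {α : Type*} [LinearOrder α]

lemma prodRows_apply (t : V₁ → SortStep V₂) (x : V₁ × V₂ → α) (v : V₁) (c : V₂) :
    (prodRows t).apply x (v, c) = (t v).apply (fun d => x (v, d)) c := by
  simp only [SortStep.apply, SortStep.prodRows, Prod.mk.injEq, true_and]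
  rfl

lemma prodCols_apply (s : SortStep V₁) (x : V₁ × V₂ → α) (v : V₁) (c : V₂) :
    (prodCols s).apply x (v, c) = s.apply (fun u => x (u, c)) v := by
  simp only [SortStep.apply, SortStep.prodCols, Prod.mk.injEq, and_true]
  rfl

lemma prodCols_apply_eq_act (s : SortStep V₁) (x : V₁ × V₂ → α) (v : V₁) :
    (fun c => (prodCols s).apply x (v, c)) = s.act (· ⊓ ·) (· ⊔ ·) (fun u c => x (u, c)) v := by
  funext c
  rw [prodCols_apply, apply_eq_act]
  exact (s.act_map (lo := (· ⊓ ·)) (hi := (· ⊔ ·)) (x := fun u c => x (u, c))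
    (fun r : V₂ → α => r c) (fun _ _ _ => rfl) (fun _ _ _ => rfl)).symm

end SortStep

section BoxProduct

variable {V₁ V₂ : Type*} {G₁ : SimpleGraph V₁} {G₂ : SimpleGraph V₂}

def rowPhase (o : V₁ → Bool) (M₂ : List (SortStep V₂)) : List (SortStep (V₁ × V₂)) :=
  M₂.map fun t => SortStep.prodRows fun v => if o v then t.flip else t

lemma rowPhase_wf (o : V₁ → Bool) {M₂ : List (SortStep V₂)} (hM₂ : ∀ t ∈ M₂, t.WF G₂) :
    ∀ s ∈ rowPhase o M₂, s.WF (G₁.boxProd G₂) := by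
  intro s hs
  obtain ⟨t, ht, rfl⟩ := List.mem_map.1 hs
  exact SortStep.WF.prodRows fun v => by split_ifs; exacts [(hM₂ t ht).flip, hM₂ t ht]

variable [DecidableEq V₁]

def boxProdNetwork : List (SortStep V₁) → List (SortStep V₂) → List (SortStep (V₁ × V₂))
  | [], M₂ => rowPhase (fun _ => false) M₂
  | s :: M₁, M₂ => rowPhase s.isUpper M₂ ++ SortStep.prodCols s :: boxProdNetwork M₁ M₂

lemma length_boxProdNetwork (M₁ : List (SortStep V₁)) (M₂ : List (SortStep V₂)) :
    (boxProdNetwork M₁ M₂).length = M₁.length * M₂.length + M₁.length + M₂.length := by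
  induction M₁ with
  | nil => simp [boxProdNetwork, rowPhase]
  | cons s M₁ ih =>
    simp only [boxProdNetwork, List.length_append, List.length_cons, ih, rowPhase,
      List.length_map]
    ring

lemma boxProdNetwork_wf {M₁ : List (SortStep V₁)} {M₂ : List (SortStep V₂)}
    (hM₁ : ∀ s ∈ M₁, s.WF G₁) (hM₂ : ∀ t ∈ M₂, t.WF G₂) :
    ∀ s ∈ boxProdNetwork M₁ M₂, s.WF (G₁.boxProd G₂) := by
  induction M₁ with
  | nil => exact rowPhase_wf _ hM₂
  | cons s M₁ ih =>
    intro s' hs'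
    rcases List.mem_append.1 hs' with hs' | hs' | ⟨_, hs'⟩
    · exact rowPhase_wf _ hM₂ s' hs'
    · exact (hM₁ s (by simp)).prodCols
    · exact ih (fun t ht => hM₁ t (by simp [ht])) s' hs'

variable [DecidableEq V₂]

lemma applyNetwork_rowPhase {α : Type*} [LinearOrder α] (o : V₁ → Bool)
    (M₂ : List (SortStep V₂)) (x : V₁ × V₂ → α) (v : V₁) (c : V₂) :
    applyNetwork (rowPhase o M₂) x (v, c) =
      applyNetwork (if o v then M₂.map SortStep.flip else M₂) (fun d => x (v, d)) c := by
  induction M₂ generalizing x with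
  | nil => cases o v <;> rfl
  | cons t M₂ ih =>
    rw [rowPhase, List.map_cons, applyNetwork_cons, ← rowPhase, ih]
    simp only [SortStep.prodRows_apply]
    cases o v <;> rfl

end BoxProduct

lemma le_of_mul_add_le_mul_add {a b r q C : ℕ} (hq : q < C) (h : a * C + r ≤ b * C + q) :
    a ≤ b := by
  by_contra! hab
  have : (b + 1) * C ≤ a * C := Nat.mul_le_mul_right C hab
  rw [add_mul, one_mul] at this
  omega

section BoxProductCorrect

open SortStep

variable {V₁ V₂ : Type*} [DecidableEq V₁] [DecidableEq V₂] [Fintype V₂]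
  {G₁ : SimpleGraph V₁} {G₂ : SimpleGraph V₂} {M₂ : List (SortStep V₂)} {rk₂ : V₂ → ℕ}

lemma IsSortingNetwork.applyNetwork_rowPhase_eq_pattern (hM₂ : IsSortingNetwork G₂ M₂ rk₂)
    (o : V₁ → Bool) {x : V₁ × V₂ → ℕ} (hx : ∀ p, x p ≤ 1) (v : V₁) (c : V₂) :
    applyNetwork (rowPhase o M₂) x (v, c) =
      if o v then descPattern rk₂ (∑ d, x (v, d)) c else ascPattern rk₂ (∑ d, x (v, d)) c := by
  rw [applyNetwork_rowPhase]
  split_ifs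
  · rw [hM₂.applyNetwork_flip_eq_descPattern fun d => hx _]
  · rw [hM₂.applyNetwork_eq_ascPattern fun d => hx _]

lemma IsSortingNetwork.sum_prodCols_apply (hM₂ : IsSortingNetwork G₂ M₂ rk₂)
    {s : SortStep V₁} (hs : s.WF G₁) {x : V₁ × V₂ → ℕ} {Z : V₁ → ℕ}
    (hZ : ∀ v, Z v ≤ Fintype.card V₂)
    (hx : ∀ v c, x (v, c) =
      if s.isUpper v then descPattern rk₂ (Z v) c else ascPattern rk₂ (Z v) c) (v : V₁) :
    ∑ c, (prodCols s).apply x (v, c) = pourStep (Fintype.card V₂) s Z v := by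
  let X : V₁ → V₂ → ℕ := fun u c => x (u, c)
  have hX : ∀ u, X u = if s.isUpper u then descPattern rk₂ (Z u) else ascPattern rk₂ (Z u) :=
    fun u => by funext c; simp only [X, hx]; split_ifs <;> rfl
  have hsum : ∀ u, ∑ c, X u c = Z u := fun u => by
    rw [hX]; split_ifs
    exacts [sum_descPattern hM₂.1 (hZ u), sum_ascPattern hM₂.1 (hZ u)]
  calc ∑ c, (prodCols s).apply x (v, c) = ∑ c, s.act (· ⊓ ·) (· ⊔ ·) X v c := by
        rw [← prodCols_apply_eq_act]
    _ = s.act (fun a b => a + b - Fintype.card V₂) (fun a b => min (Fintype.card V₂) (a + b))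
          (fun u => ∑ c, X u c) v := by
      refine s.act_map (fun r : V₂ → ℕ => ∑ c, r c) (fun hv hsw hl => ?_) (fun hv hsw hl => ?_)
      · obtain ⟨h1, h2⟩ := hs.isUpper_of_partner_ne hv hsw
        rw [hl] at h1 h2
        simp only [hX, h1, h2, Bool.not_true, Bool.false_eq_true, if_true, if_false,
          Pi.inf_apply]
        rw [sum_ascPattern hM₂.1 (hZ _), sum_descPattern hM₂.1 (hZ _),
          sum_min_ascPattern_descPattern hM₂.1 (hZ _) (hZ _)]
      · obtain ⟨h1, h2⟩ := hs.isUpper_of_partner_ne hv hsw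
        rw [hl] at h1 h2
        simp only [hX, h1, h2, Bool.not_false, Bool.false_eq_true, if_true, if_false,
          Pi.sup_apply]
        rw [sum_ascPattern hM₂.1 (hZ _), sum_descPattern hM₂.1 (hZ _),
          sum_max_descPattern_ascPattern hM₂.1 (hZ _) (hZ _)]
    _ = pourStep (Fintype.card V₂) s Z v := by simp only [hsum]; rfl

lemma IsSortingNetwork.applyNetwork_boxProdNetwork (hM₂ : IsSortingNetwork G₂ M₂ rk₂)
    {M₁ : List (SortStep V₁)} (hM₁ : ∀ s ∈ M₁, s.WF G₁) {x : V₁ × V₂ → ℕ} (hx : ∀ p, x p ≤ 1)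
    (v : V₁) (c : V₂) :
    applyNetwork (boxProdNetwork M₁ M₂) x (v, c) =
      ascPattern rk₂ (pourNetwork (Fintype.card V₂) M₁ (fun u => ∑ d, x (u, d)) v) c := by
  induction M₁ generalizing x with
  | nil => exact hM₂.applyNetwork_rowPhase_eq_pattern _ hx v c
  | cons s M₁ ih =>
    have hs := hM₁ s (by simp)
    set y := applyNetwork (rowPhase s.isUpper M₂) x
    have hy : ∀ u d, y (u, d) = if s.isUpper u then descPattern rk₂ (∑ d, x (u, d)) d
        else ascPattern rk₂ (∑ d, x (u, d)) d := hM₂.applyNetwork_rowPhase_eq_pattern _ hx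
    have hy01 : ∀ p, y p ≤ 1 := fun ⟨u, d⟩ => by
      rw [hy]; unfold descPattern ascPattern; split_ifs <;> omega
    have hy01' : ∀ p, (prodCols s).apply y p ≤ 1 := fun p => by
      rcases (prodCols s).apply_mem_pair y p with h | h <;> rw [h] <;> apply hy01
    rw [boxProdNetwork, applyNetwork_append, applyNetwork_cons,
      ih (fun t ht => hM₁ t (by simp [ht])) hy01', pourNetwork_cons]
    congr 3
    funext u
    exact hM₂.sum_prodCols_apply hs (fun u => sum_le_card_of_le_one fun d => hx (u, d)) hy u

theorem IsSortingNetwork.boxProd {M₁ : List (SortStep V₁)} {rk₁ : V₁ → ℕ}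
    (hM₁ : IsSortingNetwork G₁ M₁ rk₁) (hM₂ : IsSortingNetwork G₂ M₂ rk₂) :
    IsSortingNetwork (G₁.boxProd G₂) (boxProdNetwork M₁ M₂)
      (fun p => rk₁ p.1 * Fintype.card V₂ + rankPos rk₂ p.2) := by
  have hpos := rankPos_lt_card (rk := rk₂)
  refine ⟨fun ⟨v, c⟩ ⟨v', c'⟩ h => ?_, boxProdNetwork_wf hM₁.2.1 hM₂.2.1,
    zero_one_principle _ _ fun x hx ⟨v, c⟩ ⟨v', c'⟩ h => ?_⟩
  · dsimp only at h
    have hv : rk₁ v = rk₁ v' := le_antisymm (le_of_mul_add_le_mul_add (hpos c') h.le)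
      (le_of_mul_add_le_mul_add (hpos c) h.ge)
    rw [hv] at h
    rw [hM₁.1 hv, rankPos_injective hM₂.1 (by omega : rankPos rk₂ c = rankPos rk₂ c')]
  · dsimp only at h
    rw [hM₂.applyNetwork_boxProdNetwork hM₁.2.1 hx, hM₂.applyNetwork_boxProdNetwork hM₁.2.1 hx]
    have hZ : ∀ u, ∑ d, x (u, d) ≤ Fintype.card V₂ :=
      fun u => sum_le_card_of_le_one fun d => hx (u, d)
    have hZ' := pourNetwork_le M₁ hZ
    have := hpos c
    have := hpos c'
    rcases (le_of_mul_add_le_mul_add (hpos c') h).lt_or_eq with hlt | heq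
    · have := hZ' v
      have := hZ' v'
      unfold ascPattern
      rcases hM₁.pourNetwork_eq_zero_or_eq hZ hlt with h0 | hC <;> split_ifs <;> omega
    · rw [hM₁.1 heq] at h ⊢
      unfold ascPattern
      split_ifs <;> omega

end BoxProductCorrect

section SortingNumber

variable {V : Type*} [DecidableEq V] {G : SimpleGraph V}

lemma sortingNumber_le {M : List (SortStep V)} {rk : V → ℕ} (hM : IsSortingNetwork G M rk) :
    sortingNumber G ≤ M.length :=
  Nat.sInf_le ⟨M, rk, rfl, hM⟩

lemma exists_length_eq_sortingNumber (h : ∃ M rk, IsSortingNetwork G M rk) :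
    ∃ M rk, M.length = sortingNumber G ∧ IsSortingNetwork G M rk := by
  obtain ⟨M, rk, hM⟩ := h
  exact Nat.sInf_mem (s := {k | ∃ M rk, M.length = k ∧ IsSortingNetwork G M rk})
    ⟨M.length, M, rk, rfl, hM⟩

end SortingNumber

/-- The sorting number of the Cartesian (box) product satisfies
`st(G1 □ G2) ≤ st(G1) st(G2) + st(G1) + st(G2)`. -/
theorem sortingNumber_boxProd
    {V1 V2 : Type*} [Fintype V1] [DecidableEq V1] [Fintype V2] [DecidableEq V2]
    (G1 : SimpleGraph V1) (G2 : SimpleGraph V2)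
    (h1 : G1.Connected) (h2 : G2.Connected) :
    sortingNumber (G1.boxProd G2) ≤
      sortingNumber G1 * sortingNumber G2 + sortingNumber G1 + sortingNumber G2 := by
  obtain ⟨M₁, rk₁, hlen₁, hM₁⟩ := exists_length_eq_sortingNumber (exists_isSortingNetwork h1)
  obtain ⟨M₂, rk₂, hlen₂, hM₂⟩ := exists_length_eq_sortingNumber (exists_isSortingNetwork h2)
  calc sortingNumber (G1.boxProd G2) ≤ (boxProdNetwork M₁ M₂).length :=
        sortingNumber_le (hM₁.boxProd hM₂)
    _ = _ := by rw [length_boxProdNetwork, hlen₁, hlen₂]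
end
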